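/- arXiv:1506.03727 — 9 statements merged into one kernel-verified Lean document; each statement's English description precedes it below -/
import Mathlib

section
/- Let K be a subfield of ℂ and let 𝒪_K be the ring of algebraic integers of K. If A is an n × n matrix over K such that A^m has all entries in 𝒪_K for some positive integer m, then the characteristic polynomial of A has all coefficients in 𝒪_K. -/
open Polynomial

/-!
If `r` is an eigenvalue of `A` in an algebraic closure, then `r ^ m` is an eigenvalue of `A ^ m`,
so it is a root of the characteristic polynomial of `A ^ m`, a monic polynomial with integral
coefficients; hence `r ^ m`, and then `r`, is integral. The coefficients of the characteristic
polynomial of `A` are, up to sign, elementary symmetric functions of these eigenvalues.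
-/

namespace Matrix

variable {n : Type*} [Fintype n] [DecidableEq n]

theorem eval_charpoly_pow_eq_zero {R : Type*} [CommRing R] {M : Matrix n n R} {r : R}
    (hr : M.charpoly.eval r = 0) (m : ℕ) : (M ^ m).charpoly.eval (r ^ m) = 0 := by
  obtain ⟨c, hc⟩ : scalar n r - M ∣ scalar n (r ^ m) - M ^ m := by
    rw [map_pow]
    exact Commute.sub_dvd_pow_sub_pow (scalar_commute r (Commute.all r) M) m
  rw [eval_charpoly] at hr ⊢
  rw [hc, det_mul, hr, zero_mul]

theorem isIntegral_of_eval_charpoly_eq_zero {R S : Type*} [CommRing R] [CommRing S]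
    [Algebra R S] {M : Matrix n n S} (hM : ∀ i j, IsIntegral R (M i j)) {r : S}
    (hr : M.charpoly.eval r = 0) : IsIntegral R r := by
  let B : Matrix n n (integralClosure R S) := fun i j ↦ ⟨M i j, hM i j⟩
  have hB : B.map (algebraMap _ S) = M := rfl
  refine isIntegral_trans (A := integralClosure R S) r ⟨B.charpoly, B.charpoly_monic, ?_⟩
  rwa [eval₂_eq_eval_map, ← charpoly_map, hB]

theorem isIntegral_of_eval_charpoly_eq_zero_of_isIntegral_pow {R S : Type*} [CommRing R]
    [CommRing S] [Algebra R S] {M : Matrix n n S} {m : ℕ} (hm : 0 < m)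
    (hM : ∀ i j, IsIntegral R ((M ^ m) i j)) {r : S} (hr : M.charpoly.eval r = 0) :
    IsIntegral R r :=
  .of_pow hm (isIntegral_of_eval_charpoly_eq_zero hM (eval_charpoly_pow_eq_zero hr m))

theorem isIntegral_charpoly_coeff_of_isIntegral_pow {R K : Type*} [CommRing R] [Field K]
    [Algebra R K] {M : Matrix n n K} {m : ℕ} (hm : 0 < m)
    (hM : ∀ i j, IsIntegral R ((M ^ m) i j)) (k : ℕ) : IsIntegral R (M.charpoly.coeff k) := by
  let L := AlgebraicClosure K
  let ι := IsScalarTower.toAlgHom R K L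
  have hι : Function.Injective ι := (algebraMap K L).injective
  rw [← isIntegral_algHom_iff ι hι, IsScalarTower.coe_toAlgHom', ← coeff_map, ← charpoly_map]
  have hMι : ∀ i j, IsIntegral R (((M.map (algebraMap K L)) ^ m) i j) := fun i j ↦ by
    rw [← RingHom.mapMatrix_apply, ← map_pow, RingHom.mapMatrix_apply, map_apply]
    exact (hM i j).algebraMap
  refine isIntegral_coeff_of_factors _ ?_ (IsAlgClosed.splits _)
    (fun r hr ↦ isIntegral_of_eval_charpoly_eq_zero_of_isIntegral_pow hm hMι hr) k
  rw [(charpoly_monic _).leadingCoeff]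
  exact isIntegral_one

end Matrix

/-- If `A` is an `n × n` matrix over a subfield `K` of `ℂ` such that some positive power
`A ^ m` has all entries algebraic integers, then every coefficient of the characteristic
polynomial of `A` is an algebraic integer of `K`. -/
theorem charpoly_coeff_mem_integralClosure
    (K : Subfield ℂ) (n m : ℕ) (hm : 0 < m)
    (A : Matrix (Fin n) (Fin n) K)
    (hA : ∀ i j, (A ^ m) i j ∈ integralClosure ℤ K) :
    ∀ k, (Matrix.charpoly A).coeff k ∈ integralClosure ℤ K :=
  Matrix.isIntegral_charpoly_coeff_of_isIntegral_pow hm hA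
end

section
/- Let λ be a Salem number and let ⟨λ⟩ denote its commensurability class. If λ₁ is the unique primitive Salem number with λ = λ₁^k for some positive integer k, then ⟨λ⟩ = { λ₁^n : n a positive integer }. -/
open Polynomial

/-- A Salem number: a real algebraic integer `l > 1` such that `l⁻¹` is a conjugate of
`l` and every other conjugate has absolute value `1` (degree `2` is allowed). -/
def IsSalem (l : ℝ) : Prop :=
  1 < l ∧ IsIntegral ℤ l ∧
  (Polynomial.aeval ((l : ℂ)⁻¹)) (minpoly ℚ l) = 0 ∧
  ∀ z : ℂ, (Polynomial.aeval z) (minpoly ℚ l) = 0 →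
    z = (l : ℂ) ∨ z = ((l : ℂ))⁻¹ ∨ ‖z‖ = 1

/-- Salem numbers `a` and `b` are commensurable if `a ^ k = b ^ n` for some positive
integers `k`, `n`. -/
def SalemCommensurable (a b : ℝ) : Prop :=
  ∃ k n : ℕ, 0 < k ∧ 0 < n ∧ a ^ k = b ^ n

/-- A Salem number is primitive if it is not a proper power of another Salem number. -/
def IsPrimitiveSalem (a : ℝ) : Prop :=
  IsSalem a ∧ ∀ (μ : ℝ) (k : ℕ), IsSalem μ → 0 < k → a = μ ^ k → k = 1

/-! If `μ ^ b = λ₁ ^ c` with `b, c` coprime, then `μ = ν ^ c` and `λ₁ = ν ^ b` for a real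
`ν > 0`, and `ν` is again a Salem number. Every conjugate `z` of `ν` has `z ^ b` conjugate to
`λ₁` and `z ^ c` conjugate to `μ`; off the unit circle this pins down `z ^ b` and `z ^ c`, and
Bézout then gives `z = ν` or `z = ν⁻¹`. Moreover `ν⁻¹` is a conjugate of `ν`, since `λ₁⁻¹`
lifts to a conjugate of `ν` of modulus `< 1`. Primitivity of `λ₁` forces `b = 1`. -/

open IntermediateField

section Conjugates

variable {F E K : Type*} [Field F]

theorem aeval_minpoly_aeval_eq_zero [CommRing E] [Algebra F E] [CommRing K] [Algebra F K]
    {x : E} (p : F[X]) {w : K} (hw : aeval w (minpoly F x) = 0) :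
    aeval (aeval w p) (minpoly F (aeval x p)) = 0 := by
  obtain ⟨q, hq⟩ := minpoly.dvd F x (p := (minpoly F (aeval x p)).comp p)
    (by rw [aeval_comp, minpoly.aeval])
  rw [← aeval_comp, hq, map_mul, hw, zero_mul]

theorem exists_aeval_minpoly_eq_zero_of_aeval [Field E] [Algebra F E] [Field K] [Algebra F K]
    [IsAlgClosed K] {x : E} (hx : IsIntegral F x) (p : F[X]) {z : K}
    (hz : aeval z (minpoly F (aeval x p)) = 0) :
    ∃ w : K, aeval w (minpoly F x) = 0 ∧ aeval w p = z := by
  set g := AdjoinSimple.gen F x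
  have hg : ((aeval g p : F⟮x⟯) : E) = aeval x p := (aeval_coe _ g p).symm
  obtain ⟨φ, hφ⟩ := exists_algHom_adjoin_of_splits_of_aeval (S := {x})
    (by simpa using ⟨hx, IsAlgClosed.splits _⟩) (hg ▸ (aeval g p).2) hz
  refine ⟨φ g, by rw [aeval_algHom_apply, aeval_gen_minpoly, map_zero], ?_⟩
  rw [aeval_algHom_apply, ← hφ]
  exact congrArg φ (Subtype.ext hg)

end Conjugates

theorem eq_of_pow_eq_pow_of_coprime {G₀ : Type*} [CommGroupWithZero G₀] {a b : G₀} {m n : ℕ}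
    (hmn : m.Coprime n) (hm : a ^ m = b ^ m) (hn : a ^ n = b ^ n) : a = b := by
  rcases eq_or_ne b 0 with rfl | hb
  · rcases m.eq_zero_or_pos with rfl | hm0
    · rw [(Nat.coprime_zero_left n).mp hmn, pow_one, pow_one] at hn
      exact hn
    · exact pow_eq_zero_iff hm0.ne' |>.mp (hm.trans (zero_pow hm0.ne'))
  · have h1 : (a / b) ^ m.gcd n = 1 :=
      pow_gcd_eq_one.mpr ⟨by rw [div_pow, hm, div_self (pow_ne_zero _ hb)],
        by rw [div_pow, hn, div_self (pow_ne_zero _ hb)]⟩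
    rwa [hmn, pow_one, div_eq_one_iff_eq hb] at h1

theorem exists_coprime_pow_eq_pow {R : Type*} [Semiring R] [LinearOrder R]
    [IsStrictOrderedRing R] {x y : R} (hx : 0 ≤ x) (hy : 0 ≤ y) {m n : ℕ} (hm : 0 < m)
    (h : x ^ m = y ^ n) : ∃ b c : ℕ, b.Coprime c ∧ x ^ b = y ^ c := by
  have hd : 0 < m.gcd n := Nat.gcd_pos_of_pos_left n hm
  refine ⟨m / m.gcd n, n / m.gcd n, Nat.coprime_div_gcd_div_gcd hd, ?_⟩
  rw [← pow_left_inj₀ (pow_nonneg hx _) (pow_nonneg hy _) hd.ne', ← pow_mul, ← pow_mul,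
    Nat.div_mul_cancel (Nat.gcd_dvd_left m n), Nat.div_mul_cancel (Nat.gcd_dvd_right m n), h]

theorem ne_zero_of_isSalem_pow {x : ℝ} {n : ℕ} (h : IsSalem (x ^ n)) : n ≠ 0 := by
  rintro rfl
  exact (pow_zero x ▸ h.1).false

namespace IsSalem

variable {l : ℝ}

theorem pos (h : IsSalem l) : 0 < l := zero_lt_one.trans h.1

theorem norm_coe (h : IsSalem l) : ‖(l : ℂ)‖ = l := by
  rw [Complex.norm_real, Real.norm_of_nonneg h.pos.le]

theorem eq_of_one_lt_norm (h : IsSalem l) {z : ℂ} (hz : aeval z (minpoly ℚ l) = 0)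
    (hz1 : 1 < ‖z‖) : z = l := by
  rcases h.2.2.2 z hz with hl | hl | hl
  · exact hl
  · rw [hl, norm_inv, h.norm_coe] at hz1
    exact absurd hz1 (inv_lt_one_of_one_lt₀ h.1).not_gt
  · exact absurd hl hz1.ne'

theorem eq_inv_of_norm_lt_one (h : IsSalem l) {z : ℂ} (hz : aeval z (minpoly ℚ l) = 0)
    (hz1 : ‖z‖ < 1) : z = (l : ℂ)⁻¹ := by
  rcases h.2.2.2 z hz with hl | hl | hl
  · rw [hl, h.norm_coe] at hz1
    exact absurd hz1 h.1.not_gt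
  · exact hl
  · exact absurd hl hz1.ne

theorem pow (h : IsSalem l) {n : ℕ} (hn : 0 < n) : IsSalem (l ^ n) := by
  have hinv := aeval_minpoly_aeval_eq_zero (x := l) (X ^ n) h.2.2.1
  simp only [map_pow, aeval_X, inv_pow] at hinv
  refine ⟨one_lt_pow₀ h.1 hn.ne', h.2.1.pow n, by push_cast; exact hinv, fun z hz ↦ ?_⟩
  obtain ⟨w, hw, rfl⟩ := exists_aeval_minpoly_eq_zero_of_aeval (h.2.1.tower_top (A := ℚ))
    (X ^ n) (by simpa using hz)
  simp only [map_pow, aeval_X]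
  push_cast
  rcases h.2.2.2 w hw with rfl | rfl | hw1
  · exact Or.inl rfl
  · exact Or.inr (Or.inl (inv_pow _ _))
  · exact Or.inr (Or.inr (by rw [norm_pow, hw1, one_pow]))

end IsSalem

section Roots

variable {ν : ℝ} {n : ℕ} {z : ℂ}

theorem pow_eq_of_isSalem_pow (h : IsSalem (ν ^ n)) (hz : aeval z (minpoly ℚ ν) = 0)
    (hz1 : 1 < ‖z‖) : z ^ n = (ν : ℂ) ^ n := by
  have hzn := aeval_minpoly_aeval_eq_zero (X ^ n) hz
  simp only [map_pow, aeval_X] at hzn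
  have := h.eq_of_one_lt_norm hzn
    (by rw [norm_pow]; exact one_lt_pow₀ hz1 (ne_zero_of_isSalem_pow h))
  exact_mod_cast this

theorem pow_eq_inv_pow_of_isSalem_pow (h : IsSalem (ν ^ n)) (hz : aeval z (minpoly ℚ ν) = 0)
    (hz1 : ‖z‖ < 1) : z ^ n = (ν : ℂ)⁻¹ ^ n := by
  have hzn := aeval_minpoly_aeval_eq_zero (X ^ n) hz
  simp only [map_pow, aeval_X] at hzn
  have := h.eq_inv_of_norm_lt_one hzn
    (by rw [norm_pow]; exact pow_lt_one₀ (norm_nonneg z) hz1 (ne_zero_of_isSalem_pow h))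
  rw [this, inv_pow]
  norm_cast

end Roots

theorem IsSalem.of_pow_of_pow {ν : ℝ} {b c : ℕ} (hbc : b.Coprime c) (hν : 0 ≤ ν)
    (hb : IsSalem (ν ^ b)) (hc : IsSalem (ν ^ c)) : IsSalem ν := by
  have hb0 := ne_zero_of_isSalem_pow hb
  have hνℤ : IsIntegral ℤ ν := IsIntegral.of_pow (Nat.pos_of_ne_zero hb0) hb.2.1
  have large (z : ℂ) (hz : aeval z (minpoly ℚ ν) = 0) (hz1 : 1 < ‖z‖) : z = ν :=
    eq_of_pow_eq_pow_of_coprime hbc (pow_eq_of_isSalem_pow hb hz hz1)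
      (pow_eq_of_isSalem_pow hc hz hz1)
  have small (z : ℂ) (hz : aeval z (minpoly ℚ ν) = 0) (hz1 : ‖z‖ < 1) : z = (ν : ℂ)⁻¹ :=
    eq_of_pow_eq_pow_of_coprime hbc (pow_eq_inv_pow_of_isSalem_pow hb hz hz1)
      (pow_eq_inv_pow_of_isSalem_pow hc hz hz1)
  refine ⟨(one_lt_pow_iff_of_nonneg hν hb0).mp hb.1, hνℤ, ?_, fun z hz ↦ ?_⟩
  · obtain ⟨w, hw, hwb⟩ := exists_aeval_minpoly_eq_zero_of_aeval (hνℤ.tower_top (A := ℚ))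
      (X ^ b) (z := ((ν ^ b : ℝ) : ℂ)⁻¹) (by simpa using hb.2.2.1)
    simp only [map_pow, aeval_X] at hwb
    have hw1 : ‖w‖ < 1 := by
      rw [← pow_lt_one_iff_of_nonneg (norm_nonneg w) hb0, ← norm_pow, hwb, norm_inv, hb.norm_coe]
      exact inv_lt_one_of_one_lt₀ hb.1
    rwa [← small w hw hw1]
  · rcases lt_trichotomy ‖z‖ 1 with hz1 | hz1 | hz1
    · exact Or.inr (Or.inl (small z hz hz1))
    · exact Or.inr (Or.inr hz1)
    · exact Or.inl (large z hz hz1)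

theorem salem_commensurability_class_general
    (l l1 : ℝ) (h1 : IsPrimitiveSalem l1)
    (k : ℕ) (hk : 0 < k) (hlk : l = l1 ^ k) :
    {μ : ℝ | IsSalem μ ∧ SalemCommensurable l μ} =
      {μ : ℝ | ∃ n : ℕ, 0 < n ∧ μ = l1 ^ n} := by
  ext μ
  constructor
  · rintro ⟨hμ, a, m, -, hm, hlμ⟩
    obtain ⟨b, c, hbc, hμl1⟩ := exists_coprime_pow_eq_pow hμ.pos.le h1.1.pos.le hm
      (show μ ^ m = l1 ^ (k * a) by rw [← hlμ, hlk, pow_mul])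
    obtain ⟨ν, rfl, rfl⟩ := (pow_eq_pow_iff_of_coprime hbc).mp hμl1
    have habs {n : ℕ} (h : IsSalem (ν ^ n)) : |ν| ^ n = ν ^ n := by
      rw [pow_abs, abs_of_pos h.pos]
    have hν : IsSalem |ν| :=
      .of_pow_of_pow hbc (abs_nonneg ν) (habs h1.1 ▸ h1.1) (habs hμ ▸ hμ)
    have hb : b = 1 :=
      h1.2 |ν| b hν (Nat.pos_of_ne_zero (ne_zero_of_isSalem_pow h1.1)) (habs h1.1).symm
    exact ⟨c, Nat.pos_of_ne_zero (ne_zero_of_isSalem_pow hμ), by rw [hb, pow_one]⟩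
  · rintro ⟨n, hn, rfl⟩
    exact ⟨h1.1.pow hn, n, k, hn, hk, by rw [hlk, ← pow_mul, ← pow_mul, mul_comm]⟩

/-- If `λ` is a Salem number and `λ₁` is the primitive Salem number with `λ = λ₁ ^ k`,
then the commensurability class of `λ` is exactly `{λ₁ ^ n : n ≥ 1}`. -/
theorem salem_commensurability_class
    (l l1 : ℝ) (hl : IsSalem l) (h1 : IsPrimitiveSalem l1)
    (k : ℕ) (hk : 0 < k) (hlk : l = l1 ^ k) :
    {μ : ℝ | IsSalem μ ∧ SalemCommensurable l μ} =
      {μ : ℝ | ∃ n : ℕ, 0 < n ∧ μ = l1 ^ n} :=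
  salem_commensurability_class_general l l1 h1 k hk hlk
end

section
/- If λ is a Salem number, then deg(λ^{1/2}) equals deg(λ) or 2·deg(λ). Moreover deg(λ^{1/2}) = deg(λ) if and only if either λ^{1/2} is a Salem number, or deg(λ^{1/2}) = 2 and the field norm of λ^{1/2} from ℚ(λ^{1/2}) to ℚ equals −1. -/
open Polynomial

/-!
Write `μ = √l` and let `P` be the minimal polynomial of `l`. Since `ℚ(l) ⊆ ℚ(μ)` and `μ` is
a root of `P(X²)`, `deg μ` is a multiple of `deg l` and at most `2 deg l`. If
`deg μ = 2 deg l`, the minimal polynomial of `μ` is `P(X²)`, so `-μ` is a conjugate of `μ`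
and `μ` is not Salem.

If `deg μ = deg l`, then `μ = g(l)` for some `g ∈ ℚ[X]`, and every conjugate `y` of `μ` is
recovered from its square as `y = g(y²)`; moreover `g(l⁻¹)² = l⁻¹`, so `g(l⁻¹) = ±μ⁻¹`.
With the sign `+`, the conjugates of `μ` are `μ`, `μ⁻¹` and square roots of conjugates of `l`
on the unit circle, so `μ` is Salem. With the sign `-`, the identity `g(l) g(l⁻¹) = -1`
transfers to every conjugate `w` of `l`; for `|w| = 1` it reads `|g(w)|² = -1`. Hence `l` has
no conjugate on the unit circle, `deg l = 2`, and the minimal polynomial of `μ` has the roots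
`μ` and `-μ⁻¹`.
-/

open IntermediateField

section Minpoly

variable {K A B : Type*} [Field K] [Ring A] [Algebra K A] [CommRing B] [Algebra K B]
  {x z : A} {y w : B} {g : K[X]}

theorem aeval_eq_zero_of_aeval_minpoly_eq_zero {p : K[X]} (hp : aeval x p = 0)
    (hy : aeval y (minpoly K x) = 0) : aeval y p = 0 :=
  aeval_eq_zero_of_dvd_aeval_eq_zero (minpoly.dvd K x hp) hy

theorem aeval_pow_minpoly_pow_eq_zero (k : ℕ) (hy : aeval y (minpoly K x) = 0) :
    aeval (y ^ k) (minpoly K (x ^ k)) = 0 := by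
  simpa [aeval_comp] using
    aeval_eq_zero_of_aeval_minpoly_eq_zero (p := (minpoly K (x ^ k)).comp (X ^ k))
      (by simp [aeval_comp]) hy

theorem aeval_pow_eq_of_aeval_minpoly_eq_zero {k : ℕ} (hg : aeval (x ^ k) g = x)
    (hy : aeval y (minpoly K x) = 0) : aeval (y ^ k) g = y := by
  have h := aeval_eq_zero_of_aeval_minpoly_eq_zero (p := g.comp (X ^ k) - X)
    (by simp [aeval_comp, hg]) hy
  rwa [map_sub, aeval_comp, map_pow, aeval_X, sub_eq_zero] at h

theorem aeval_pow_eq_of_aeval_minpoly_pow_eq_zero {k : ℕ} (hg : aeval (x ^ k) g = x)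
    (hw : aeval w (minpoly K (x ^ k)) = 0) : aeval w g ^ k = w := by
  have h := aeval_eq_zero_of_aeval_minpoly_eq_zero (p := g ^ k - X) (by simp [hg]) hw
  rwa [map_sub, map_pow, aeval_X, sub_eq_zero] at h

theorem aeval_minpoly_aeval_eq_zero_s11 (hg : aeval z g = x) (hw : aeval w (minpoly K z) = 0) :
    aeval (aeval w g) (minpoly K x) = 0 := by
  simpa [aeval_comp] using
    aeval_eq_zero_of_aeval_minpoly_eq_zero (p := (minpoly K x).comp g)
      (by simp [aeval_comp, hg]) hw

end Minpoly

section Roots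

variable {K L : Type*} [Field K] [Field L] [Algebra K L] {p : K[X]} {a b : L}

theorem two_le_natDegree_of_aeval_eq_zero (hp : p ≠ 0) (hab : a ≠ b) (ha : aeval a p = 0)
    (hb : aeval b p = 0) : 2 ≤ p.natDegree := by
  classical
  have hsub : ({a, b} : Finset L).val ≤ p.aroots L :=
    (Multiset.le_iff_subset (Finset.nodup _)).2 fun c hc => by
      rcases Finset.mem_insert.1 (Finset.mem_def.2 hc) with rfl | hc
      · exact mem_aroots.2 ⟨hp, ha⟩
      · rw [Finset.mem_singleton.1 hc]; exact mem_aroots.2 ⟨hp, hb⟩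
  calc 2 = ({a, b} : Finset L).card := (Finset.card_pair hab).symm
    _ ≤ Multiset.card (p.aroots L) := Multiset.card_le_card hsub
    _ ≤ (p.map (algebraMap K L)).natDegree := card_roots' _
    _ ≤ p.natDegree := natDegree_map_le

theorem coeff_zero_eq_mul_of_natDegree_eq_two (hp : p.Monic) (h2 : p.natDegree = 2) (hab : a ≠ b)
    (ha : aeval a p = 0) (hb : aeval b p = 0) : algebraMap K L (p.coeff 0) = a * b := by
  rw [hp.as_sum, h2] at ha hb
  simp only [Finset.sum_range_succ, Finset.sum_range_zero, map_add, map_pow, map_mul, aeval_X,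
    aeval_C, zero_add, pow_zero, pow_one, mul_one] at ha hb
  have hsum : a + b + algebraMap K L (p.coeff 1) = 0 :=
    (mul_eq_zero.1 (by linear_combination ha - hb)).resolve_left (sub_ne_zero.2 hab)
  linear_combination ha - a * hsum

end Roots

section Degree

variable {K F : Type*} [Field K] [Field F] [Algebra K F] {x : F}

theorem exists_aeval_eq_of_mem_adjoin_simple (hx : IsIntegral K x) {y : F} (hy : y ∈ K⟮x⟯) :
    ∃ p : K[X], aeval x p = y := by
  rwa [← mem_toSubalgebra, adjoin_simple_toSubalgebra_of_isAlgebraic hx.isAlgebraic,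
    Algebra.adjoin_singleton_eq_range_aeval] at hy

theorem natDegree_minpoly_dvd_of_mem_adjoin_simple (hx : IsIntegral K x) {y : F}
    (hy : y ∈ K⟮x⟯) : (minpoly K y).natDegree ∣ (minpoly K x).natDegree := by
  have := adjoin.finiteDimensional hx
  rw [← adjoin.finrank hx, ← minpoly_eq (⟨y, hy⟩ : K⟮x⟯)]
  exact minpoly.degree_dvd (Algebra.IsIntegral.isIntegral _)

theorem exists_aeval_eq_of_natDegree_minpoly_eq (hx : IsIntegral K x) {y : F} (hy : y ∈ K⟮x⟯)
    (h : (minpoly K y).natDegree = (minpoly K x).natDegree) : ∃ p : K[X], aeval y p = x := by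
  have := adjoin.finiteDimensional hx
  have hle : K⟮y⟯ ≤ K⟮x⟯ := adjoin_simple_le_iff.2 hy
  have hyK : IsIntegral K y := IsIntegral.of_finite K (⟨y, hy⟩ : K⟮x⟯) |>.map (K⟮x⟯).val
  have heq : K⟮y⟯ = K⟮x⟯ :=
    eq_of_le_of_finrank_eq hle (by rw [adjoin.finrank hyK, adjoin.finrank hx, h])
  exact exists_aeval_eq_of_mem_adjoin_simple hyK (heq ▸ mem_adjoin_simple_self K x)

theorem minpoly_dvd_comp_X_pow (k : ℕ) : minpoly K x ∣ (minpoly K (x ^ k)).comp (X ^ k) :=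
  minpoly.dvd K x (by simp [aeval_comp])

theorem natDegree_minpoly_le_mul_natDegree_minpoly_pow (hx : IsIntegral K x) {k : ℕ}
    (hk : 0 < k) : (minpoly K x).natDegree ≤ k * (minpoly K (x ^ k)).natDegree := by
  have hmonic := (minpoly.monic (hx.pow k)).comp (monic_X_pow k) (by simpa using hk.ne')
  calc (minpoly K x).natDegree ≤ ((minpoly K (x ^ k)).comp (X ^ k)).natDegree :=
        natDegree_le_of_dvd (minpoly_dvd_comp_X_pow k) hmonic.ne_zero
    _ = k * (minpoly K (x ^ k)).natDegree := by rw [natDegree_comp, natDegree_X_pow, mul_comm]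

theorem minpoly_eq_comp_X_pow_of_natDegree_eq (hx : IsIntegral K x) {k : ℕ} (hk : 0 < k)
    (h : (minpoly K x).natDegree = k * (minpoly K (x ^ k)).natDegree) :
    minpoly K x = (minpoly K (x ^ k)).comp (X ^ k) := by
  refine (eq_of_monic_of_dvd_of_natDegree_le (minpoly.monic hx)
    ((minpoly.monic (hx.pow k)).comp (monic_X_pow k) (by simpa using hk.ne'))
    (minpoly_dvd_comp_X_pow k) ?_).symm
  rw [natDegree_comp, natDegree_X_pow, h, mul_comm]

theorem natDegree_minpoly_eq_or_eq_two_mul (hx : IsIntegral K x) :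
    (minpoly K x).natDegree = (minpoly K (x ^ 2)).natDegree ∨
      (minpoly K x).natDegree = 2 * (minpoly K (x ^ 2)).natDegree := by
  obtain ⟨c, hc⟩ := natDegree_minpoly_dvd_of_mem_adjoin_simple hx
    (pow_mem (mem_adjoin_simple_self K x) 2)
  have hle := natDegree_minpoly_le_mul_natDegree_minpoly_pow hx two_pos
  have hpos := minpoly.natDegree_pos hx
  have hpos2 := minpoly.natDegree_pos (hx.pow 2)
  rw [hc] at hle hpos ⊢
  have hc2 : c ≤ 2 := le_of_mul_le_mul_left (by linarith) hpos2
  interval_cases c <;> omega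

end Degree

section Salem

variable {l μ : ℝ} {g : ℚ[X]}

theorem Complex.aeval_ofReal_rat (p : ℚ[X]) (x : ℝ) : aeval (x : ℂ) p = aeval x p :=
  aeval_algebraMap_apply ℂ x p

theorem Complex.aeval_conj_rat (p : ℚ[X]) (z : ℂ) :
    aeval (starRingEnd ℂ z) p = starRingEnd ℂ (aeval z p) :=
  aeval_algHom_apply ((starRingEnd ℂ).toRatAlgHom) z p

theorem IsSalem.isIntegral (hl : IsSalem l) : IsIntegral ℚ l :=
  hl.2.1.tower_top

theorem IsSalem.aeval_inv_eq_zero (hl : IsSalem l) : aeval l⁻¹ (minpoly ℚ l) = 0 := by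
  have h := hl.2.2.1
  rwa [← Complex.ofReal_inv, Complex.aeval_ofReal_rat, Complex.ofReal_eq_zero] at h

theorem IsSalem.two_le_natDegree (hl : IsSalem l) : 2 ≤ (minpoly ℚ l).natDegree :=
  two_le_natDegree_of_aeval_eq_zero (minpoly.ne_zero hl.isIntegral)
    ((inv_lt_one_of_one_lt₀ hl.1).trans hl.1).ne' (minpoly.aeval ℚ l) hl.aeval_inv_eq_zero

theorem IsSalem.exists_norm_eq_one (hl : IsSalem l) (h : 3 ≤ (minpoly ℚ l).natDegree) :
    ∃ w : ℂ, aeval w (minpoly ℚ l) = 0 ∧ ‖w‖ = 1 := by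
  classical
  have hcard : ((minpoly ℚ l).aroots ℂ).toFinset.card = (minpoly ℚ l).natDegree := by
    rw [Multiset.toFinset_card_of_nodup
        (nodup_roots (minpoly.irreducible hl.isIntegral).separable.map),
      ← (IsAlgClosed.splits _).natDegree_eq_card_roots, natDegree_map]
  obtain ⟨w, hw, hwl⟩ := Finset.exists_mem_notMem_of_card_lt_card
    (s := {(l : ℂ), (l : ℂ)⁻¹}) (t := ((minpoly ℚ l).aroots ℂ).toFinset)
    (by rw [hcard]; exact (Finset.card_le_two).trans_lt h)
  have hw := (mem_aroots.1 (Multiset.mem_toFinset.1 hw)).2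
  simp only [Finset.mem_insert, Finset.mem_singleton, not_or] at hwl
  exact ⟨w, hw, ((hl.2.2.2 w hw).resolve_left hwl.1).resolve_left hwl.2⟩

theorem norm_ne_one_of_aeval_mul_aeval_inv_eq_neg_one (hl : IsIntegral ℚ l)
    (hgl : aeval l g * aeval l⁻¹ g = -1) {w : ℂ} (hw : aeval w (minpoly ℚ l) = 0) :
    ‖w‖ ≠ 1 := by
  have hl0 : l ≠ 0 := by
    rintro rfl
    rw [inv_zero] at hgl
    nlinarith [mul_self_nonneg (aeval (0 : ℝ) g)]
  obtain ⟨k, hk⟩ := exists_aeval_eq_of_mem_adjoin_simple hl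
    (inv_mem (mem_adjoin_simple_self ℚ l))
  have hkw : aeval w k = w⁻¹ := by
    have h := aeval_eq_zero_of_aeval_minpoly_eq_zero (p := X * k - 1)
      (by simp [hk, hl0]) hw
    rw [map_sub, map_mul, aeval_X, map_one, sub_eq_zero] at h
    exact (eq_inv_of_mul_eq_one_right h)
  have hgw : aeval w g * aeval w⁻¹ g = -1 := by
    have h := aeval_eq_zero_of_aeval_minpoly_eq_zero (p := g * g.comp k + 1)
      (by simp [aeval_comp, hk, hgl]) hw
    rw [map_add, map_mul, aeval_comp, hkw, map_one] at h
    linear_combination h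
  intro h1
  rw [Complex.inv_eq_conj h1, Complex.aeval_conj_rat, Complex.mul_conj] at hgw
  have := Complex.normSq_nonneg (aeval w g)
  have h2 : Complex.normSq (aeval w g) = -1 := by exact_mod_cast hgw
  linarith

theorem isSalem_of_aeval_inv_eq_inv (hl : IsSalem l) (hμ : 0 < μ) (hμl : μ ^ 2 = l)
    (hg : aeval l g = μ) (hinv : aeval l⁻¹ g = μ⁻¹) : IsSalem μ := by
  have hμ2 : aeval (μ ^ 2) g = μ := hμl ▸ hg
  refine ⟨by nlinarith [hl.1], IsIntegral.of_pow two_pos (hμl ▸ hl.2.1), ?_, fun y hy => ?_⟩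
  · have h := aeval_minpoly_aeval_eq_zero_s11 hg hl.aeval_inv_eq_zero
    rw [hinv] at h
    rw [← Complex.ofReal_inv, Complex.aeval_ofReal_rat, h, Complex.ofReal_zero]
  · have hy2 : aeval (y ^ 2) (minpoly ℚ l) = 0 := hμl ▸ aeval_pow_minpoly_pow_eq_zero 2 hy
    have hgy : aeval (y ^ 2) g = y := aeval_pow_eq_of_aeval_minpoly_eq_zero hμ2 hy
    rcases hl.2.2.2 _ hy2 with h | h | h
    · left; rw [← hgy, h, Complex.aeval_ofReal_rat, hg]
    · right; left
      rw [← hgy, h, ← Complex.ofReal_inv, Complex.aeval_ofReal_rat, hinv, Complex.ofReal_inv]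
    · right; right; rwa [norm_pow, pow_eq_one_iff_of_nonneg (norm_nonneg y) two_ne_zero] at h

theorem isSalem_or_of_natDegree_minpoly_eq (hl : IsSalem l) (hμ : 0 < μ) (hμl : μ ^ 2 = l)
    (h : (minpoly ℚ μ).natDegree = (minpoly ℚ l).natDegree) :
    IsSalem μ ∨ ((minpoly ℚ μ).natDegree = 2 ∧ (minpoly ℚ μ).coeff 0 = -1) := by
  have hμQ : IsIntegral ℚ μ := IsIntegral.of_pow two_pos (by rw [hμl]; exact hl.isIntegral)
  obtain ⟨g, hg⟩ : ∃ g : ℚ[X], aeval l g = μ := hμl ▸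
    exists_aeval_eq_of_natDegree_minpoly_eq hμQ (pow_mem (mem_adjoin_simple_self ℚ μ) 2)
      (hμl ▸ h.symm)
  have hsq : aeval l⁻¹ g ^ 2 = μ⁻¹ ^ 2 := by
    rw [aeval_pow_eq_of_aeval_minpoly_pow_eq_zero (hμl ▸ hg) (hμl ▸ hl.aeval_inv_eq_zero),
      inv_pow, hμl]
  rcases sq_eq_sq_iff_eq_or_eq_neg.1 hsq with hinv | hinv
  · exact .inl (isSalem_of_aeval_inv_eq_inv hl hμ hμl hg hinv)
  right
  have hroot : aeval (-μ⁻¹) (minpoly ℚ μ) = 0 :=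
    hinv ▸ aeval_minpoly_aeval_eq_zero_s11 hg hl.aeval_inv_eq_zero
  have hne : μ ≠ -μ⁻¹ := by have := inv_pos.2 hμ; linarith
  have h2 : (minpoly ℚ μ).natDegree = 2 := by
    refine le_antisymm (not_lt.1 fun h3 => ?_)
      (two_le_natDegree_of_aeval_eq_zero (minpoly.ne_zero hμQ) hne (minpoly.aeval ℚ μ) hroot)
    obtain ⟨w, hw, hw1⟩ := hl.exists_norm_eq_one (h ▸ h3)
    exact norm_ne_one_of_aeval_mul_aeval_inv_eq_neg_one hl.isIntegral
      (by rw [hg, hinv, mul_neg, mul_inv_cancel₀ hμ.ne']) hw hw1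
  refine ⟨h2, ?_⟩
  have hc := coeff_zero_eq_mul_of_natDegree_eq_two (minpoly.monic hμQ) h2 hne
    (minpoly.aeval ℚ μ) hroot
  rw [mul_neg, mul_inv_cancel₀ hμ.ne'] at hc
  exact (algebraMap ℚ ℝ).injective (by rw [hc, map_neg, map_one])

theorem natDegree_minpoly_ne_two_mul_of_isSalem (hμ : IsSalem μ) :
    (minpoly ℚ μ).natDegree ≠ 2 * (minpoly ℚ (μ ^ 2)).natDegree := by
  intro h
  have hroot : aeval (-μ : ℂ) (minpoly ℚ μ) = 0 := by
    rw [minpoly_eq_comp_X_pow_of_natDegree_eq hμ.isIntegral two_pos h, aeval_comp, map_pow,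
      aeval_X, ← Complex.ofReal_neg, ← Complex.ofReal_pow, Complex.aeval_ofReal_rat, neg_sq,
      minpoly.aeval, Complex.ofReal_zero]
  have h1 := hμ.1
  rcases hμ.2.2.2 _ hroot with h | h | h
  · have : -μ = μ := by exact_mod_cast h
    linarith
  · have : -μ = μ⁻¹ := by exact_mod_cast h
    have := inv_pos.2 (zero_lt_one.trans h1)
    linarith
  · rw [norm_neg, Complex.norm_real, Real.norm_of_nonneg (by linarith)] at h
    linarith

end Salem

/-- If `λ` is a Salem number, then `deg (λ^{1/2})` equals `deg λ` or `2 deg λ`, and it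
equals `deg λ` if and only if either `λ^{1/2}` is a Salem number, or `deg (λ^{1/2}) = 2`
and the field norm of `λ^{1/2}` is `-1` (for a degree-2 monic minimal polynomial the
norm is the constant coefficient). -/
theorem salem_sqrt_degree
    (l : ℝ) (hl : IsSalem l) :
    ((minpoly ℚ (Real.sqrt l)).natDegree = (minpoly ℚ l).natDegree ∨
      (minpoly ℚ (Real.sqrt l)).natDegree = 2 * (minpoly ℚ l).natDegree) ∧
    ((minpoly ℚ (Real.sqrt l)).natDegree = (minpoly ℚ l).natDegree ↔
      (IsSalem (Real.sqrt l) ∨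
        ((minpoly ℚ (Real.sqrt l)).natDegree = 2 ∧
          (minpoly ℚ (Real.sqrt l)).coeff 0 = -1))) := by
  have hμ : 0 < √l := Real.sqrt_pos.2 (by linarith [hl.1])
  have hμl : √l ^ 2 = l := Real.sq_sqrt (by linarith [hl.1])
  have hμQ : IsIntegral ℚ √l := IsIntegral.of_pow two_pos (by rw [hμl]; exact hl.isIntegral)
  have hdeg := natDegree_minpoly_eq_or_eq_two_mul hμQ
  rw [hμl] at hdeg
  refine ⟨hdeg, isSalem_or_of_natDegree_minpoly_eq hl hμ hμl, fun h => hdeg.resolve_right ?_⟩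
  rcases h with hS | ⟨h2, -⟩
  · simpa only [hμl] using natDegree_minpoly_ne_two_mul_of_isSalem hS
  · have := hl.two_le_natDegree
    omega
end

section
/- Let λ be a Salem number and K a subfield of ℚ(λ + λ⁻¹). Then λ is square-rootable over K via a square in K if and only if λ^{1/2} is a Salem number. -/
/-!
Write `l = s²` with `s > 0`. The embedding `ℚ(s) → ℂ` sending `s` to a conjugate `z` with
`z² ∈ {l, l⁻¹}` fixes `l + l⁻¹`, hence fixes `K` pointwise, so such a `z` is also a
conjugate of `s` over `K`.

If `s` is Salem, this makes `s⁻¹` a root of `μ = minpoly K s`; as `μ(±1) ≠ 0`, `μ` is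
palindromic of even degree, and since `-s` is not a conjugate of `s`, `μ(x) μ(-x) = p(x²)` by
comparing degrees. So `l` is square-rootable via `1 = 1²`.

Conversely, a square-rootability via `b²` puts all coefficients of `q` in `K`. Then `μ` divides
`q(x) q(-x)` and has degree at least `deg q`, so it is associated with `q(x)` or `q(-x)`: its
roots are closed under inversion (`q` is palindromic) and never contain both `y` and `-y` (`p` is
separable). For a root `z` of `minpoly ℚ s`, `z²` is a conjugate of `l`: if `z² ∈ {l, l⁻¹}`
then `z` is a conjugate of `s` over `K`, hence `z = s` or `z = s⁻¹`; otherwise `|z| = 1`.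
-/

open Polynomial

/-- An element of a subfield `K` of `ℝ` is totally positive if every field embedding
`K → ℝ` sends it to a positive real number. -/
def TotallyPositive (K : Subfield ℝ) (a : K) : Prop :=
  ∀ φ : K →+* ℝ, 0 < φ a

/-- A Salem number `l` is square-rootable over `K ⊆ ℚ(l + l⁻¹)` via `α ∈ K` if `α` is
totally positive and there is a monic palindromic polynomial `q`, whose even-degree
coefficients lie in `K` and whose odd-degree coefficients lie in `√α · K`, with
`q(x) q(-x) = p(x²)`, where `p` is the minimal polynomial of `l` over `K`. -/
def SquareRootableVia (K : Subfield ℝ) (l : ℝ) (a : K) : Prop :=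
  TotallyPositive K a ∧
  ∃ q : Polynomial ℝ, q.Monic ∧
    (∀ j ≤ q.natDegree, q.coeff j = q.coeff (q.natDegree - j)) ∧
    (∀ j, Even j → q.coeff j ∈ K) ∧
    (∀ j, Odd j → ∃ c ∈ K, q.coeff j = Real.sqrt (a : ℝ) * c) ∧
    q * q.comp (-Polynomial.X) =
      ((minpoly K l).map K.subtype).comp (Polynomial.X ^ 2)

open IntermediateField

theorem Associated.aeval_eq_zero_iff {R L : Type*} [CommRing R] [CommRing L] [Algebra R L]
    {p q : R[X]} (h : Associated p q) {x : L} : aeval x p = 0 ↔ aeval x q = 0 :=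
  ⟨aeval_eq_zero_of_dvd_aeval_eq_zero h.dvd, aeval_eq_zero_of_dvd_aeval_eq_zero h.symm.dvd⟩

namespace Polynomial

theorem reverse_eq_self_iff {R : Type*} [Semiring R] {f : R[X]} :
    f.reverse = f ↔ ∀ j ≤ f.natDegree, f.coeff j = f.coeff (f.natDegree - j) := by
  refine ⟨fun h j hj ↦ ?_, fun h ↦ ?_⟩
  · rw [← revAt_le hj, ← coeff_reverse, h]
  · ext n
    rw [coeff_reverse]
    rcases le_or_gt n f.natDegree with hn | hn
    · rw [revAt_le hn, ← h n hn]
    · rw [revAt_eq_self_of_lt hn]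

theorem aeval_reverse_eq_zero_iff {R L : Type*} [CommRing R] [Field L] [Algebra R L]
    {f : R[X]} {x : L} (hx : x ≠ 0) : aeval x f.reverse = 0 ↔ aeval x⁻¹ f = 0 := by
  let := invertibleOfNonzero (inv_ne_zero hx)
  simpa only [invOf_eq_inv, inv_inv, aeval_def] using
    eval₂_reverse_eq_zero_iff (algebraMap R L) x⁻¹ f

theorem aeval_neg_ne_zero_of_mul_comp_neg_eq_comp_sq {R L : Type*} [CommRing R] [CommRing L]
    [IsDomain L] [NeZero (2 : L)] [Algebra R L] {p Q : R[X]} (hp : p.Separable)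
    (hQ : Q * Q.comp (-X) = p.comp (X ^ 2)) {x : L} (hx : x ≠ 0) (hQx : aeval x Q = 0) :
    aeval (-x) Q ≠ 0 := by
  intro hQnx
  have hp0 : aeval (x ^ 2) p = 0 := by
    simpa [aeval_comp, hQx] using (congrArg (aeval x) hQ).symm
  have hp1 : 2 * x * aeval (x ^ 2) (derivative p) = 0 := by
    simpa [derivative_mul, derivative_comp, aeval_comp, hQx, hQnx, one_add_one_eq_two,
      map_ofNat, -mul_eq_zero, -zero_eq_mul] using
      (congrArg (fun f ↦ aeval x (derivative f)) hQ).symm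
  exact hp.aeval_derivative_ne_zero hp0
    ((mul_eq_zero.1 hp1).resolve_left (mul_ne_zero two_ne_zero hx))

variable {R : Type*} [CommRing R] [IsDomain R] {f : R[X]}

theorem reverse_eq_self_of_dvd_reverse (hf : f.Monic) (h1 : f.eval 1 ≠ 0)
    (hdvd : f ∣ f.reverse) : f.reverse = f := by
  have hrev := eq_leadingCoeff_mul_of_monic_of_dvd_of_natDegree_le hf hdvd f.reverse_natDegree_le
  let := invertibleOne (α := R)
  have h := eval₂_reverse_mul_pow (RingHom.id R) 1 f
  simp only [invOf_one, one_pow, mul_one, eval₂_id] at h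
  rw [hrev, eval_mul, eval_C] at h
  rw [hrev, (mul_eq_right₀ h1).mp h, C_1, one_mul]

theorem even_natDegree_of_reverse_eq_self [NeZero (2 : R)] (hf : f.reverse = f)
    (h1 : f.eval (-1) ≠ 0) : Even f.natDegree := by
  let := invertibleOne (α := R)
  let := invertibleNeg (1 : R)
  have h := eval₂_reverse_mul_pow (RingHom.id R) (-1) f
  simp only [invOf_neg, invOf_one, eval₂_id, hf] at h
  rw [mul_eq_left₀ h1] at h
  refine (neg_one_pow_eq_one_iff_even fun h1 ↦ two_ne_zero (α := R) ?_).mp h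
  rw [← one_add_one_eq_two, ← neg_eq_iff_add_eq_zero, h1]

theorem natDegree_eq_of_mul_comp_neg_eq_comp_sq {p Q : R[X]} (hQ0 : Q ≠ 0)
    (hQ : Q * Q.comp (-X) = p.comp (X ^ 2)) : Q.natDegree = p.natDegree := by
  have := congrArg natDegree hQ
  rw [natDegree_mul hQ0 (comp_neg_X_eq_zero_iff.not.2 hQ0), natDegree_comp, natDegree_comp,
    natDegree_neg, natDegree_X, natDegree_X_pow] at this
  omega

theorem aeval_inv_eq_zero_and_aeval_neg_ne_zero_of_dvd_mul_comp_neg {K L : Type*} [Field K]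
    [Field L] [NeZero (2 : L)] [Algebra K L] {p Q μ : K[X]} (hp : p.Separable) (hQ0 : Q ≠ 0)
    (hrev : Q.reverse = Q) (hQ : Q * Q.comp (-X) = p.comp (X ^ 2)) (hμ : Irreducible μ)
    (hdvd : μ ∣ p.comp (X ^ 2)) (hdeg : p.natDegree ≤ μ.natDegree) {x : L} (hx : x ≠ 0)
    (hμx : aeval x μ = 0) : aeval x⁻¹ μ = 0 ∧ aeval (-x) μ ≠ 0 := by
  rw [← natDegree_eq_of_mul_comp_neg_eq_comp_sq hQ0 hQ] at hdeg
  rw [← hQ] at hdvd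
  rcases hμ.prime.dvd_or_dvd hdvd with h | h
  · have hroots : ∀ y : L, aeval y μ = 0 ↔ aeval y Q = 0 :=
      fun _ ↦ (associated_of_dvd_of_natDegree_le h hQ0 hdeg).aeval_eq_zero_iff
    simp only [ne_eq, hroots] at hμx ⊢
    rw [← aeval_reverse_eq_zero_iff hx, hrev]
    exact ⟨hμx, aeval_neg_ne_zero_of_mul_comp_neg_eq_comp_sq hp hQ hx hμx⟩
  · have hroots : ∀ y : L, aeval y μ = 0 ↔ aeval y (Q.comp (-X)) = 0 :=
      fun _ ↦ (associated_of_dvd_of_natDegree_le h (comp_neg_X_eq_zero_iff.not.2 hQ0)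
        (by simpa [natDegree_comp] using hdeg)).aeval_eq_zero_iff
    simp only [ne_eq, hroots, aeval_comp, map_neg, aeval_X, neg_neg] at hμx ⊢
    rw [neg_inv, ← aeval_reverse_eq_zero_iff (neg_ne_zero.2 hx), hrev]
    exact ⟨hμx, fun hQx ↦ aeval_neg_ne_zero_of_mul_comp_neg_eq_comp_sq hp hQ hx hQx hμx⟩

end Polynomial

theorem minpoly.natDegree_le_of_mem_adjoin {F E : Type*} [Field F] [Field E] [Algebra F E]
    {x y : E} (hx : IsIntegral F x) (hy : y ∈ F⟮x⟯) :
    (minpoly F y).natDegree ≤ (minpoly F x).natDegree := by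
  have := adjoin.finiteDimensional hx
  rw [← adjoin.finrank hx]
  exact (minpoly_eq (⟨y, hy⟩ : F⟮x⟯)) ▸ minpoly.natDegree_le _

theorem minpoly.mul_comp_neg_X_eq_minpoly_sq_comp {K E : Type*} [Field K] [Field E]
    [Algebra K E] {s : E} (hs : IsIntegral K s) (hd : Even (minpoly K s).natDegree)
    (hneg : Polynomial.aeval (-s) (minpoly K s) ≠ 0) :
    minpoly K s * (minpoly K s).comp (-X) = (minpoly K (s ^ 2)).comp (X ^ 2) := by
  set μ := minpoly K s
  have hμ : μ.Monic := minpoly.monic hs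
  have hν : minpoly K (-s) = μ.comp (-X) := by rw [minpoly.neg, hd.neg_one_pow, one_mul]
  set P := (minpoly K (s ^ 2)).comp (X ^ 2)
  have hP : P.Monic := (minpoly.monic (hs.pow 2)).comp (monic_X_pow 2) (by simp)
  have hdvd : ∀ x : E, x ^ 2 = s ^ 2 → minpoly K x ∣ P :=
    fun x hx ↦ minpoly.dvd K x (by simp [P, Polynomial.aeval_comp, hx])
  have hcop : IsCoprime (minpoly K (-s)) μ :=
    (minpoly.irreducible hs.neg).coprime_iff_not_dvd.2 fun h ↦
      hneg (aeval_eq_zero_of_dvd_aeval_eq_zero h (minpoly.aeval K (-s)))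
  have hdeg : (minpoly K (s ^ 2)).natDegree ≤ μ.natDegree :=
    minpoly.natDegree_le_of_mem_adjoin hs (pow_mem (mem_adjoin_simple_self K s) 2)
  rw [← hν]
  refine (eq_of_monic_of_dvd_of_natDegree_le (hμ.mul (minpoly.monic hs.neg)) hP
    (hcop.symm.mul_dvd (hdvd s rfl) (hdvd (-s) (neg_sq s))) ?_).symm
  rw [natDegree_mul hμ.ne_zero (minpoly.ne_zero hs.neg), hν, natDegree_comp, natDegree_comp,
    natDegree_X_pow, natDegree_neg, natDegree_X]
  omega

theorem minpoly.aeval_eq_zero_of_isScalarTower (F : Type*) {K E L : Type*} [Field F]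
    [Field K] [Ring E] [CommRing L] [Algebra F K] [Algebra F E] [Algebra K E] [Algebra F L]
    [Algebra K L] [IsScalarTower F K E] [IsScalarTower F K L] {s : E} {x : L}
    (h : Polynomial.aeval x (minpoly K s) = 0) : Polynomial.aeval x (minpoly F s) = 0 := by
  simpa using aeval_eq_zero_of_dvd_aeval_eq_zero (minpoly.dvd_map_of_isScalarTower F K s) h

theorem aeval_ofReal_eq_zero_iff {R : Type*} [CommRing R] [Algebra R ℝ] (f : R[X]) (x : ℝ) :
    aeval (x : ℂ) f = 0 ↔ aeval x f = 0 := by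
  rw [← Complex.ofReal_eq_zero, ← Complex.coe_algebraMap, ← aeval_algebraMap_apply]

theorem aeval_minpoly_subfield_eq_zero_of_sq_add_inv_sq {K : Subfield ℝ} {s : ℝ}
    (hs : IsIntegral ℚ s) (hK : K ≤ Subfield.closure {s ^ 2 + (s ^ 2)⁻¹}) {z : ℂ}
    (hz : aeval z (minpoly ℚ s) = 0)
    (hzs : z ^ 2 + (z ^ 2)⁻¹ = ((s ^ 2 + (s ^ 2)⁻¹ : ℝ) : ℂ)) :
    aeval z (minpoly K s) = 0 := by
  set A := ℚ⟮s⟯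
  set g := AdjoinSimple.gen ℚ s
  set φ : A →ₐ[ℚ] ℂ := (algHomAdjoinIntegralEquiv ℚ hs).symm
    ⟨z, (mem_aroots).2 ⟨minpoly.ne_zero hs, hz⟩⟩
  have hφ : φ g = z := algHomAdjoinIntegralEquiv_symm_apply_gen ℚ hs _
  -- `φ` agrees with the inclusion `ℚ(s) ⊆ ℂ` on `s² + s⁻²`, hence on `K`.
  have hfix : K ≤ ((φ : A →+* ℂ).eqLocusField ((algebraMap ℝ ℂ).comp A.val)).map
      (A.val : A →+* ℝ) := by
    refine hK.trans (Subfield.closure_le.2 (Set.singleton_subset_iff.2 ?_))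
    refine ⟨g ^ 2 + (g ^ 2)⁻¹, ?_, rfl⟩
    simp [RingHom.mem_eqLocusField, hφ, hzs, g]
  set j : K →+* A := K.subtype.codRestrict A fun x ↦ by
    obtain ⟨y, -, hy⟩ := hfix x.2
    show (x : ℝ) ∈ A
    exact hy ▸ y.2
  have hφj : (φ : A →+* ℂ).comp j = algebraMap K ℂ := by
    ext x
    obtain ⟨y, hy, hyx⟩ := hfix x.2
    rw [RingHom.comp_apply, show j x = y from Subtype.ext hyx.symm,
      show (φ : A →+* ℂ) y = _ from hy, RingHom.comp_apply, hyx]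
    rfl
  have hj : eval₂ j g (minpoly K s) = 0 :=
    A.val.injective <| by rw [map_zero, ← minpoly.aeval K s, aeval_def, hom_eval₂]; rfl
  have := congrArg (φ : A →+* ℂ) hj
  rwa [hom_eval₂, hφj, map_zero, AlgHom.coe_toRingHom, hφ, ← aeval_def] at this

theorem squareRootableVia_one_of_isSalem {K : Subfield ℝ} {s : ℝ} (hs : IsSalem s)
    (hK : K ≤ Subfield.closure {s ^ 2 + (s ^ 2)⁻¹}) : SquareRootableVia K (s ^ 2) 1 := by
  have hs0 : 0 < s := one_pos.trans hs.1
  have hsK : IsIntegral K s := hs.2.1.tower_top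
  set μ := minpoly K s
  have hμ : μ.Monic := minpoly.monic hsK
  have hinv : aeval s μ.reverse = 0 := by
    rw [aeval_reverse_eq_zero_iff hs0.ne', ← aeval_ofReal_eq_zero_iff]
    refine aeval_minpoly_subfield_eq_zero_of_sq_add_inv_sq hs.2.1.tower_top hK ?_ ?_
    · push_cast
      exact hs.2.2.1
    · push_cast
      rw [inv_pow, inv_inv, add_comm]
  have hneg : aeval (-s) μ ≠ 0 := fun h ↦ by
    have := (aeval_ofReal_eq_zero_iff _ _).2 (minpoly.aeval_eq_zero_of_isScalarTower ℚ h)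
    rcases hs.2.2.2 _ this with h' | h' | h' <;>
      simp only [← Complex.ofReal_inv, Complex.ofReal_inj, Complex.norm_real, norm_neg,
        Real.norm_of_nonneg hs0.le] at h' <;>
      linarith [inv_pos.2 hs0, hs.1]
  have hroot : ∀ c : K, μ.eval c = 0 → s = c := fun c h ↦ (isConjRoot_of_aeval_eq_zero hsK
    (by rw [aeval_algebraMap_apply_eq_algebraMap_eval, h, map_zero])).symm.eq_algebraMap
  have hrev : μ.reverse = μ := reverse_eq_self_of_dvd_reverse hμ
    (fun h ↦ by simpa [hs.1.ne'] using hroot 1 h) (minpoly.dvd K s hinv)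
  have hd : Even μ.natDegree := even_natDegree_of_reverse_eq_self hrev fun h ↦ by
    have := hroot (-1) h
    push_cast at this
    linarith
  have hprod := minpoly.mul_comp_neg_X_eq_minpoly_sq_comp hsK hd hneg
  refine ⟨fun φ ↦ by simp, μ.map K.subtype, hμ.map _, fun j hj ↦ ?_, fun j _ ↦ by simp,
    fun j _ ↦ ⟨μ.coeff j, (μ.coeff j).2, by simp⟩, ?_⟩
  · rw [natDegree_map] at hj ⊢
    simp only [coeff_map]
    rw [reverse_eq_self_iff.1 hrev j hj]
  · simpa [Polynomial.map_mul, map_comp] using congrArg (map K.subtype) hprod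

theorem SquareRootableVia.exists_reverse_eq_self_of_sq {K : Subfield ℝ} {l : ℝ} {b : K}
    (h : SquareRootableVia K l (b ^ 2)) : ∃ Q : K[X], Q.Monic ∧ Q.reverse = Q ∧
      Q * Q.comp (-X) = (minpoly K l).comp (X ^ 2) := by
  obtain ⟨-, q, hmon, hpal, hev, hodd, hq⟩ := h
  have hcoeff : ∀ j, q.coeff j ∈ Set.range K.subtype := fun j ↦ by
    rcases Nat.even_or_odd j with hj | hj
    · exact ⟨⟨_, hev j hj⟩, rfl⟩
    · obtain ⟨c, hc, hqc⟩ := hodd j hj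
      have hb : √((b ^ 2 : K) : ℝ) ∈ K := by
        push_cast
        rw [Real.sqrt_sq_eq_abs]
        rcases abs_choice (b : ℝ) with h | h <;> rw [h]
        exacts [b.2, neg_mem b.2]
      exact ⟨⟨_, mul_mem hb hc⟩, hqc.symm⟩
  obtain ⟨Q, rfl, -, hQ⟩ :=
    lifts_and_natDegree_eq_and_monic ((lifts_iff_coeff_lifts q).2 hcoeff) hmon
  refine ⟨Q, hQ, reverse_eq_self_iff.2 fun j hj ↦ K.subtype.injective ?_,
    map_injective K.subtype K.subtype.injective ?_⟩
  · simpa [natDegree_map] using hpal j (by rwa [natDegree_map])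
  · simpa [Polynomial.map_mul, map_comp] using hq

theorem isSalem_of_mul_comp_neg_eq_minpoly_comp_sq {K : Subfield ℝ} {s : ℝ}
    (hl : IsSalem (s ^ 2)) (hs0 : 0 < s) (hK : K ≤ Subfield.closure {s ^ 2 + (s ^ 2)⁻¹})
    {Q : K[X]} (hQ0 : Q ≠ 0) (hrev : Q.reverse = Q)
    (hQ : Q * Q.comp (-X) = (minpoly K (s ^ 2)).comp (X ^ 2)) : IsSalem s := by
  have hsZ : IsIntegral ℤ s := IsIntegral.of_pow two_pos hl.2.1
  have hsK : IsIntegral K s := hsZ.tower_top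
  set μ := minpoly K s
  have hroot : ∀ x : ℂ, x ≠ 0 → aeval x μ = 0 →
      aeval x⁻¹ μ = 0 ∧ aeval (-x) μ ≠ 0 :=
    fun _ ↦ aeval_inv_eq_zero_and_aeval_neg_ne_zero_of_dvd_mul_comp_neg
      (minpoly.irreducible (hsK.pow 2)).separable hQ0 hrev hQ (minpoly.irreducible hsK)
      (minpoly.dvd K s (by simp [aeval_comp]))
      (minpoly.natDegree_le_of_mem_adjoin hsK (pow_mem (mem_adjoin_simple_self K s) 2))
  have hsC : (s : ℂ) ≠ 0 := Complex.ofReal_ne_zero.2 hs0.ne'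
  have hs : aeval (s : ℂ) μ = 0 := (aeval_ofReal_eq_zero_iff _ _).2 (minpoly.aeval K s)
  have hsinv : aeval (s : ℂ)⁻¹ μ = 0 := (hroot _ hsC hs).1
  refine ⟨?_, hsZ, minpoly.aeval_eq_zero_of_isScalarTower ℚ hsinv, fun z hz ↦ ?_⟩
  · nlinarith [hl.1]
  have hz2 : aeval (z ^ 2) (minpoly ℚ (s ^ 2)) = 0 := by
    have : minpoly ℚ s ∣ (minpoly ℚ (s ^ 2)).comp (X ^ 2) :=
      minpoly.dvd ℚ s (by simp [aeval_comp])
    simpa [aeval_comp] using aeval_eq_zero_of_dvd_aeval_eq_zero this hz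
  have hzμ := aeval_minpoly_subfield_eq_zero_of_sq_add_inv_sq hsZ.tower_top hK hz
  rcases hl.2.2.2 _ hz2 with h | h | h
  · push_cast at h
    rcases sq_eq_sq_iff_eq_or_eq_neg.1 h with rfl | rfl
    · exact .inl rfl
    · exact absurd (hzμ (by push_cast; rw [neg_sq])) (hroot _ hsC hs).2
  · push_cast at h
    rw [← inv_pow] at h
    rcases sq_eq_sq_iff_eq_or_eq_neg.1 h with rfl | rfl
    · exact .inr (.inl rfl)
    · exact absurd (hzμ (by push_cast; rw [neg_sq, inv_pow, inv_inv, add_comm]))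
        (hroot _ (inv_ne_zero hsC) hsinv).2
  · rw [norm_pow, pow_eq_one_iff_of_nonneg (norm_nonneg _) two_ne_zero] at h
    exact .inr (.inr h)

/-- A Salem number `λ` is square-rootable over a subfield `K` of `ℚ(λ + λ⁻¹)` via a
square in `K` if and only if `λ^{1/2}` is a Salem number. -/
theorem squareRootable_via_square_iff_sqrt_salem
    (l : ℝ) (hl : IsSalem l) (K : Subfield ℝ)
    (hK : K ≤ Subfield.closure {l + l⁻¹}) :
    (∃ a : K, (∃ b : K, a = b ^ 2) ∧ SquareRootableVia K l a) ↔
      IsSalem (Real.sqrt l) := by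
  obtain ⟨s, hs0, rfl⟩ : ∃ s : ℝ, 0 < s ∧ s ^ 2 = l :=
    ⟨√l, Real.sqrt_pos.2 (one_pos.trans hl.1), Real.sq_sqrt (one_pos.trans hl.1).le⟩
  rw [Real.sqrt_sq hs0.le]
  refine ⟨fun ⟨a, ⟨b, hab⟩, h⟩ ↦ ?_,
    fun hs ↦ ⟨1, ⟨1, (one_pow 2).symm⟩, squareRootableVia_one_of_isSalem hs hK⟩⟩
  obtain ⟨Q, hQ, hrev, hprod⟩ := (hab ▸ h).exists_reverse_eq_self_of_sq
  exact isSalem_of_mul_comp_neg_eq_minpoly_comp_sq hl hs0 hK hQ.ne_zero hrev hprod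
end

section
/- Let λ be a Salem number with deg(λ^{1/2}) = 2 and field norm of λ^{1/2} equal to −1, and let K be a subfield of ℚ(λ + λ⁻¹). Then K = ℚ and λ is square-rootable over ℚ (via the square-free positive integer D with ℚ(λ^{1/2}) = ℚ(√D)). -/
/-!
Put `s = √λ` and let `X ^ 2 + t X - 1` be its minimal polynomial over `ℚ`. Then
`λ + λ⁻¹ = 2 + t ^ 2` is rational, which forces `K = ℚ`, and `λ = 1 - t s` is irrational, so
`X ^ 2 - (2 + t ^ 2) X + 1` is the minimal polynomial of `λ`. Since `(2 s + t) ^ 2 = t ^ 2 + 4`,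
writing `t ^ 2 + 4 = D c ^ 2` with `D` squarefree gives `ℚ(s) = ℚ(√D)`, and
`q = X ^ 2 + c √D X + 1` is a square root: `q(x) q(-x) = x ^ 4 - (2 + t ^ 2) x ^ 2 + 1`.
-/

open Polynomial

theorem minpoly_aeval_of_natDegree_eq_two {F A : Type*} [Field F] [Ring A] [Algebra F A] {x : A}
    (h : (minpoly F x).natDegree = 2) :
    x ^ 2 + algebraMap F A ((minpoly F x).coeff 1) * x + algebraMap F A ((minpoly F x).coeff 0)
      = 0 := by
  have hint : IsIntegral F x := by
    by_contra hx
    simp [minpoly.eq_zero hx] at h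
  have := minpoly.aeval F x
  rw [(minpoly.monic hint).as_sum, h] at this
  simpa [Finset.sum_range_succ, Algebra.smul_def, add_comm, add_left_comm, add_assoc] using this

theorem minpoly_eq_of_monic_of_natDegree_eq_two {F A : Type*} [Field F] [CommRing A] [IsDomain A]
    [Algebra F A] {x : A} {p : F[X]} (hp : p.Monic) (hdeg : p.natDegree = 2)
    (hx : aeval x p = 0) (hxF : x ∉ (algebraMap F A).range) : minpoly F x = p :=
  have hint : IsIntegral F x := ⟨p, hp, hx⟩
  (eq_of_monic_of_dvd_of_natDegree_le (minpoly.monic hint) hp (minpoly.dvd F x hx)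
    (hdeg ▸ (minpoly.two_le_natDegree_iff hint).2 hxF)).symm

theorem Subfield.closure_singleton_ratCast {L : Type*} [DivisionRing L] (q : ℚ) :
    Subfield.closure {(q : L)} = ⊥ :=
  eq_bot_iff.2 <| Subfield.closure_le.2 <| Set.singleton_subset_iff.2 <|
    SubfieldClass.ratCast_mem _ q

theorem Subfield.closure_singleton_ratCast_mul_add {L : Type*} [DivisionRing L] [CharZero L]
    (y : L) {a : ℚ} (ha : a ≠ 0) (b : ℚ) :
    Subfield.closure {(a : L) * y + b} = Subfield.closure {y} := by
  apply le_antisymm <;> rw [Subfield.closure_le, Set.singleton_subset_iff]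
  · exact add_mem (mul_mem (SubfieldClass.ratCast_mem _ a) (Subfield.subset_closure rfl))
      (SubfieldClass.ratCast_mem _ b)
  · have hx : (a : L) * y + b ∈ Subfield.closure {(a : L) * y + b} := Subfield.subset_closure rfl
    have := mul_mem (inv_mem (SubfieldClass.ratCast_mem _ a))
      (sub_mem hx (SubfieldClass.ratCast_mem _ b))
    rwa [add_sub_cancel_right, inv_mul_cancel_left₀ (Rat.cast_ne_zero.2 ha)] at this

theorem irrational_iff_notMem_bot {x : ℝ} : Irrational x ↔ x ∉ (⊥ : Subfield ℝ) := by
  rw [Subfield.bot_eq_of_charZero, RingHom.mem_fieldRange]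
  rfl

theorem Rat.exists_squarefree_mul_sq {r : ℚ} (hr : 0 < r) :
    ∃ D : ℕ, 0 < D ∧ Squarefree D ∧ ∃ c : ℚ, 0 < c ∧ r = D * c ^ 2 := by
  obtain ⟨D, b, hD, hb, hbD, hsq⟩ :=
    Nat.sq_mul_squarefree_of_pos <|
      Nat.mul_pos (Int.natAbs_pos.2 (Rat.num_pos.2 hr).ne') r.den_pos
  refine ⟨D, hD, hsq, b / r.den, by positivity, ?_⟩
  have hnum : ((r.num.natAbs : ℕ) : ℚ) = r.num := by
    rw [Nat.cast_natAbs, Int.cast_abs, abs_of_pos (by exact_mod_cast Rat.num_pos.2 hr)]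
  have hbD' : (b : ℚ) ^ 2 * D = r.num * r.den := by rw [← hnum]; exact_mod_cast hbD
  have hden : (r.den : ℚ) ≠ 0 := by positivity
  rw [div_pow, mul_div_assoc', eq_div_iff (pow_ne_zero 2 hden), mul_comm (D : ℚ), hbD']
  nth_rw 1 [← Rat.num_div_den r]
  field_simp

theorem irrational_of_natDegree_minpoly_ne_one {x : ℝ} (h : (minpoly ℚ x).natDegree ≠ 1) :
    Irrational x :=
  fun hx => h (minpoly.natDegree_eq_one_iff.2 hx)

theorem totallyPositive_natCast (K : Subfield ℝ) {n : ℕ} (hn : 0 < n) (h : (n : ℝ) ∈ K) :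
    TotallyPositive K ⟨n, h⟩ := fun φ => by
  rw [show (⟨n, h⟩ : K) = n from rfl, map_natCast]
  exact_mod_cast hn

theorem TotallyPositive.coe_pos {K : Subfield ℝ} {a : K} (ha : TotallyPositive K a) :
    0 < (a : ℝ) :=
  ha K.subtype

/-- The witness is `q = X ^ 2 + √(m + 2) X + 1`, as
`q(x) q(-x) = (x ^ 2 + 1) ^ 2 - (m + 2) x ^ 2`. -/
theorem squareRootableVia_of_minpoly_eq {K : Subfield ℝ} {l : ℝ} {a m c : K}
    (ha : TotallyPositive K a) (hmin : minpoly K l = X ^ 2 - C m * X + 1)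
    (hm : (m : ℝ) + 2 = a * c ^ 2) : SquareRootableVia K l a := by
  set b := √(a : ℝ) * c
  have hb : b ^ 2 = m + 2 := by rw [mul_pow, Real.sq_sqrt ha.coe_pos.le, hm]
  have hcoeff : ∀ j, (X ^ 2 + C b * X + 1 : ℝ[X]).coeff j =
      if j = 0 ∨ j = 2 then 1 else if j = 1 then b else 0 := by
    intro j
    rcases j with _ | _ | _ | j <;> simp [coeff_X, coeff_one]
  have hdeg : (X ^ 2 + C b * X + 1 : ℝ[X]).natDegree = 2 := by compute_degree!
  refine ⟨ha, X ^ 2 + C b * X + 1, by monicity!, ?_, ?_, ?_, ?_⟩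
  · intro j hj
    rw [hdeg] at hj ⊢
    interval_cases j <;> simp [hcoeff]
  · intro j hj
    rw [hcoeff]
    split_ifs <;> simp_all
  · intro j hj
    rw [hcoeff]
    split_ifs with h0 h1
    · exact absurd hj (by rcases h0 with rfl | rfl <;> decide)
    · exact ⟨c, c.2, rfl⟩
    · exact ⟨0, zero_mem K, (mul_zero _).symm⟩
  · rw [hmin]
    simp only [Polynomial.map_add, Polynomial.map_sub, Polynomial.map_mul, Polynomial.map_pow,
      map_X, map_C, Polynomial.map_one, add_comp, sub_comp, mul_comp, pow_comp, X_comp, C_comp,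
      one_comp]
    have : C b ^ 2 = C (K.subtype m) + 2 := by
      rw [← C_pow, hb, C_add, C_ofNat]; rfl
    linear_combination (-X ^ 2) * this

section Quadratic

variable {s : ℝ} {t : ℚ}

theorem sq_add_inv_sq_of_quadratic (h : s ^ 2 + t * s - 1 = 0) (hs : s ≠ 0) :
    s ^ 2 + (s ^ 2)⁻¹ = ((2 + t ^ 2 : ℚ) : ℝ) := by
  field_simp
  push_cast
  linear_combination (s ^ 2 - t * s - 1) * h

theorem two_mul_add_eq_sqrt_of_quadratic (h : s ^ 2 + t * s - 1 = 0) (hs : 0 < s) :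
    2 * s + t = √(t ^ 2 + 4) := by
  have hpos : 0 < 2 * s + t := by
    have : 2 * s + t = (s ^ 2 + 1) / s := by field_simp; linear_combination h
    rw [this]; positivity
  rw [eq_comm, Real.sqrt_eq_iff_mul_self_eq_of_pos hpos]
  linear_combination 4 * h

theorem irrational_sq_of_quadratic (h : s ^ 2 + t * s - 1 = 0) (hs : 0 ≤ s)
    (hirr : Irrational s) : Irrational (s ^ 2) := by
  rcases eq_or_ne t 0 with rfl | ht
  · have : s = 1 := by push_cast at h; nlinarith
    exact absurd (this ▸ hirr) not_irrational_one
  · have : s ^ 2 = ((1 : ℚ) : ℝ) - t * s := by push_cast; linear_combination h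
    rw [this]
    exact (hirr.ratCast_mul ht).ratCast_sub 1

theorem minpoly_bot_sq_of_quadratic (h : s ^ 2 + t * s - 1 = 0) (hs : 0 ≤ s)
    (hirr : Irrational s) :
    minpoly (⊥ : Subfield ℝ) (s ^ 2) =
      X ^ 2 - C ((2 + t ^ 2 : ℚ) : (⊥ : Subfield ℝ)) * X + 1 := by
  refine minpoly_eq_of_monic_of_natDegree_eq_two (by monicity!) (by compute_degree!) ?_ ?_
  · simp [map_ofNat]
    linear_combination (s ^ 2 - t * s - 1) * h
  · rintro ⟨a, ha⟩
    exact irrational_iff_notMem_bot.1 (irrational_sq_of_quadratic h hs hirr) (ha ▸ a.2)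

end Quadratic

theorem squareRootable_of_sqrt_degree_two_norm_neg_one_general
    (l : ℝ)
    (hdeg : (minpoly ℚ (Real.sqrt l)).natDegree = 2)
    (hnorm : (minpoly ℚ (Real.sqrt l)).coeff 0 = -1)
    (K : Subfield ℝ) (hK : K ≤ Subfield.closure {l + l⁻¹}) :
    K = ⊥ ∧
    ∃ D : ℕ, 0 < D ∧ Squarefree D ∧
      Subfield.closure {Real.sqrt l} = Subfield.closure {Real.sqrt (D : ℝ)} ∧
      ∃ hD : (D : ℝ) ∈ K, SquareRootableVia K l ⟨(D : ℝ), hD⟩ := by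
  generalize hs_def : √l = s at hdeg hnorm ⊢
  set t := (minpoly ℚ s).coeff 1
  have hquad : s ^ 2 + t * s - 1 = 0 := by
    simpa [hnorm, ← sub_eq_add_neg] using minpoly_aeval_of_natDegree_eq_two hdeg
  have hs : 0 < s := (hs_def ▸ Real.sqrt_nonneg l).lt_of_ne' fun h => by simp [h] at hquad
  obtain rfl : s ^ 2 = l := hs_def ▸ Real.sq_sqrt (Real.sqrt_pos.1 (hs_def ▸ hs)).le
  obtain rfl : K = ⊥ := le_bot_iff.1 <| hK.trans_eq <| by
    rw [sq_add_inv_sq_of_quadratic hquad hs.ne', Subfield.closure_singleton_ratCast]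
  obtain ⟨D, hD, hsqf, c, hc, htD⟩ :=
    Rat.exists_squarefree_mul_sq (by positivity : 0 < t ^ 2 + 4)
  have hsD : 2 * s + t = c * √D := by
    rw [two_mul_add_eq_sqrt_of_quadratic hquad hs,
      show (t : ℝ) ^ 2 + 4 = D * (c : ℝ) ^ 2 by exact_mod_cast htD,
      Real.sqrt_mul (Nat.cast_nonneg D), Real.sqrt_sq (by positivity), mul_comm]
  refine ⟨rfl, D, hD, hsqf, ?_, natCast_mem _ D, squareRootableVia_of_minpoly_eq
    (totallyPositive_natCast ⊥ hD _) (minpoly_bot_sq_of_quadratic hquad hs.le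
      (irrational_of_natDegree_minpoly_ne_one (by omega))) (c := (c : (⊥ : Subfield ℝ))) ?_⟩
  · rw [show s = ((c / 2 : ℚ) : ℝ) * √D + ((-t / 2 : ℚ) : ℝ) by
      push_cast; linear_combination hsD / 2,
      Subfield.closure_singleton_ratCast_mul_add _ (by positivity)]
  · show ((2 + t ^ 2 : ℚ) : ℝ) + 2 = D * ((c : ℚ) : ℝ) ^ 2
    exact_mod_cast (by linear_combination htD : 2 + t ^ 2 + 2 = (D : ℚ) * c ^ 2)

/-- If `λ` is a Salem number with `deg (λ^{1/2}) = 2` and norm of `λ^{1/2}` equal to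
`-1` (the constant coefficient of its degree-2 minimal polynomial), and
`K ⊆ ℚ(λ + λ⁻¹)`, then `K = ℚ` and `λ` is square-rootable over `ℚ` via the square-free
positive integer `D` with `ℚ(λ^{1/2}) = ℚ(√D)`. -/
theorem squareRootable_of_sqrt_degree_two_norm_neg_one
    (l : ℝ) (hl : IsSalem l)
    (hdeg : (minpoly ℚ (Real.sqrt l)).natDegree = 2)
    (hnorm : (minpoly ℚ (Real.sqrt l)).coeff 0 = -1)
    (K : Subfield ℝ) (hK : K ≤ Subfield.closure {l + l⁻¹}) :
    K = ⊥ ∧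
    ∃ D : ℕ, 0 < D ∧ Squarefree D ∧
      Subfield.closure {Real.sqrt l} = Subfield.closure {Real.sqrt (D : ℝ)} ∧
      ∃ hD : (D : ℝ) ∈ K, SquareRootableVia K l ⟨(D : ℝ), hD⟩ :=
  squareRootable_of_sqrt_degree_two_norm_neg_one_general l hdeg hnorm K hK
end

section
/- Let λ be a Salem number, K ⊆ ℚ(λ + λ⁻¹), and p(x) the minimal polynomial of λ over K with m = deg p. Suppose λ is square-rootable over K via α ∈ K. If m ≡ 0 (mod 4), then p(−1) is a square in 𝒪_K; if m ≡ 2 (mod 4), then there exists a nonzero k ∈ K with p(−1) = α·k². -/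
open Polynomial

/-!
Evaluating `q(x) q(-x) = p(x²)` at `x = i` gives `p(-1) = q(i) q(-i) = |q(i)|²`, since `q` is
real. Palindromy gives `q(i) = i^m · conj (q(i))`, so `q(i)` is real when `m ≡ 0 mod 4` and
purely imaginary when `m ≡ 2 mod 4`. The real part of `q(i)` is a signed sum of the even
coefficients, hence lies in `K`; the imaginary part is a signed sum of the odd ones, hence lies in
`√α · K`.
Integrality of `p(-1)` is inherited from that of `λ` through the coefficients of `p`.
-/

namespace Complex

open ComplexConjugate

lemma I_pow_two_mul (k : ℕ) : I ^ (2 * k) = ((-1 : ℝ) ^ k : ℝ) := by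
  push_cast
  rw [pow_mul, I_sq]

lemma I_pow_two_mul_add_one (k : ℕ) : I ^ (2 * k + 1) = ((-1 : ℝ) ^ k : ℝ) * I := by
  rw [pow_succ, I_pow_two_mul]

lemma im_eq_zero_of_eq_I_pow_mul_conj {z : ℂ} {n : ℕ} (h : z = I ^ n * conj z)
    (hn : n % 4 = 0) : z.im = 0 := by
  rw [I_pow_eq_pow_mod, hn, pow_zero, one_mul] at h
  exact conj_eq_iff_im.mp h.symm

lemma re_eq_zero_of_eq_I_pow_mul_conj {z : ℂ} {n : ℕ} (h : z = I ^ n * conj z)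
    (hn : n % 4 = 2) : z.re = 0 := by
  rw [I_pow_eq_pow_mod, hn, I_sq, neg_one_mul] at h
  have := congrArg re h
  rw [neg_re, conj_re] at this
  linarith

end Complex

namespace Polynomial

open Complex ComplexConjugate

lemma natDegree_eq_of_mul_comp_neg_X_eq_comp_X_sq {R : Type*} [CommRing R] [IsDomain R]
    {q P : R[X]} (hq : q ≠ 0) (h : q * q.comp (-X) = P.comp (X ^ 2)) :
    q.natDegree = P.natDegree := by
  have := congrArg natDegree h
  rw [natDegree_mul hq (comp_neg_X_eq_zero_iff.not.mpr hq), natDegree_comp, natDegree_comp,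
    natDegree_neg, natDegree_X, natDegree_X_pow] at this
  omega

lemma isIntegral_eval_minpoly {R K L : Type*} [CommRing R] [Field K] [Field L] [Algebra R K]
    [Algebra K L] [Algebra R L] [IsScalarTower R K L] {x : L} (hx : IsIntegral R x) {r : K}
    (hr : IsIntegral R r) : IsIntegral R ((minpoly K x).eval r) := by
  have hdvd : minpoly K x ∣ (minpoly R x).map (algebraMap R K) :=
    minpoly.dvd K x (by rw [aeval_map_algebraMap, minpoly.aeval])
  have hcoeff := isIntegral_coeff_of_dvd _ _ (minpoly.monic hx) (minpoly.monic hx.tower_top) hdvd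
  rw [eval_eq_sum_range]
  exact IsIntegral.sum _ fun i _ ↦ (hcoeff i).mul (hr.pow i)

lemma reverse_eq_self_of_coeff_eq {R : Type*} [Semiring R] {q : R[X]}
    (h : ∀ j ≤ q.natDegree, q.coeff j = q.coeff (q.natDegree - j)) : q.reverse = q := by
  ext j
  rw [coeff_reverse]
  rcases le_or_gt j q.natDegree with hj | hj
  · rw [revAt_le hj, h j hj]
  · rw [revAt_eq_self_of_lt hj]

lemma aeval_I_eq_I_pow_mul_conj_of_reverse_eq {q : ℝ[X]} (h : q.reverse = q) :
    aeval I q = I ^ q.natDegree * conj (aeval I q) := by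
  let : Invertible I := invertibleOfNonzero I_ne_zero
  have := eval₂_reverse_mul_pow (algebraMap ℝ ℂ) I q
  rw [h, invOf_eq_inv, inv_I, ← conj_I, ← aeval_def, ← aeval_def, aeval_conj] at this
  rw [mul_comm]
  exact this.symm

lemma normSq_aeval_I_of_mul_comp_neg_X {q P : ℝ[X]} (h : q * q.comp (-X) = P.comp (X ^ 2)) :
    normSq (aeval I q) = P.eval (-1) := by
  have := congrArg (aeval I) h
  rw [map_mul, aeval_comp, aeval_comp, map_neg, aeval_X, map_pow, aeval_X, I_sq, ← conj_I,
    aeval_conj, mul_conj, ← ofReal_one, ← ofReal_neg, ← coe_algebraMap,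
    aeval_algebraMap_apply_eq_algebraMap_eval] at this
  exact_mod_cast this

variable {S : Type*} [SetLike S ℝ] [SubringClass S ℝ] {K : S} {q : ℝ[X]}

lemma re_aeval_I_mem (h : ∀ j, Even j → q.coeff j ∈ K) : (aeval I q).re ∈ K := by
  rw [aeval_eq_sum_range, re_sum]
  refine sum_mem fun j _ ↦ ?_
  obtain ⟨k, rfl | rfl⟩ := Nat.even_or_odd' j
  · rw [I_pow_two_mul, smul_re, ofReal_re, smul_eq_mul]
    exact mul_mem (h _ (even_two_mul k)) (pow_mem (neg_mem (one_mem K)) k)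
  · rw [I_pow_two_mul_add_one, smul_re, re_ofReal_mul, I_re, mul_zero, smul_zero]
    exact zero_mem K

lemma im_aeval_I_mem (h : ∀ j, Odd j → q.coeff j ∈ K) : (aeval I q).im ∈ K := by
  rw [aeval_eq_sum_range, im_sum]
  refine sum_mem fun j _ ↦ ?_
  obtain ⟨k, rfl | rfl⟩ := Nat.even_or_odd' j
  · rw [I_pow_two_mul, smul_im, ofReal_im, smul_zero]
    exact zero_mem K
  · rw [I_pow_two_mul_add_one, smul_im, im_ofReal_mul, I_im, mul_one, smul_eq_mul]
    exact mul_mem (h _ (odd_two_mul_add_one k)) (pow_mem (neg_mem (one_mem K)) k)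

lemma exists_im_aeval_I_eq_mul {s : ℝ} (hs : s ≠ 0)
    (h : ∀ j, Odd j → ∃ c ∈ K, q.coeff j = s * c) :
    ∃ b ∈ K, (aeval I q).im = s * b := by
  refine ⟨(aeval I (s⁻¹ • q)).im, im_aeval_I_mem fun j hj ↦ ?_, ?_⟩
  · obtain ⟨c, hc, hqc⟩ := h j hj
    rwa [coeff_smul, hqc, smul_eq_mul, inv_mul_cancel_left₀ hs]
  · rw [map_smul, smul_im, smul_eq_mul, mul_inv_cancel_left₀ hs]

end Polynomial

theorem squareRootable_eval_neg_one_general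
    (l : ℝ) (hl : IsSalem l) (K : Subfield ℝ)
    (a : K) (ha : SquareRootableVia K l a) :
    ((minpoly K l).natDegree % 4 = 0 →
      ∃ k : K, IsIntegral ℤ k ∧ (minpoly K l).eval (-1) = k ^ 2) ∧
    ((minpoly K l).natDegree % 4 = 2 →
      ∃ k : K, k ≠ 0 ∧ (minpoly K l).eval (-1) = a * k ^ 2) := by
  obtain ⟨hα_pos, q, hq_monic, hq_pal, hq_even, hq_odd, hqp⟩ := ha
  have hlK : IsIntegral K l := hl.2.1.tower_top
  set p := minpoly K l
  set z := aeval Complex.I q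
  have hdeg : q.natDegree = p.natDegree := by
    simpa using natDegree_eq_of_mul_comp_neg_X_eq_comp_X_sq hq_monic.ne_zero hqp
  have hz : z = Complex.I ^ p.natDegree * starRingEnd ℂ z :=
    hdeg ▸ aeval_I_eq_I_pow_mul_conj_of_reverse_eq (reverse_eq_self_of_coeff_eq hq_pal)
  have hnorm : ((p.eval (-1) : K) : ℝ) = z.re ^ 2 + z.im ^ 2 := by
    rw [sq, sq, ← Complex.normSq_apply, normSq_aeval_I_of_mul_comp_neg_X hqp, eval_map]
    exact (eval₂_hom K.subtype (-1)).symm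
  refine ⟨fun hm ↦ ?_, fun hm ↦ ?_⟩
  · have hk : p.eval (-1) = ⟨z.re, re_aeval_I_mem hq_even⟩ ^ 2 := by
      ext
      simp [hnorm, Complex.im_eq_zero_of_eq_I_pow_mul_conj hz hm]
    exact ⟨_, .of_pow two_pos (hk ▸ isIntegral_eval_minpoly hl.2.1 isIntegral_one.neg), hk⟩
  · have hα : 0 < (a : ℝ) := hα_pos K.subtype
    obtain ⟨b, hbK, hb : z.im = _⟩ := exists_im_aeval_I_eq_mul (Real.sqrt_pos.2 hα).ne' hq_odd
    have hk : p.eval (-1) = a * ⟨b, hbK⟩ ^ 2 := by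
      ext
      rw [hnorm, Complex.re_eq_zero_of_eq_I_pow_mul_conj hz hm, hb, mul_pow, Real.sq_sqrt hα.le]
      push_cast
      ring
    refine ⟨⟨b, hbK⟩, fun hb0 ↦ ?_, hk⟩
    have hroot : p.IsRoot (-1) := by simp [IsRoot, hk, hb0]
    have : p.natDegree = 1 := natDegree_eq_of_degree_eq_some
      (degree_eq_one_of_irreducible_of_root (minpoly.irreducible hlK) hroot)
    omega

/-- Let `λ` be a Salem number, `K ⊆ ℚ(λ + λ⁻¹)`, `p` the minimal polynomial of `λ` over
`K` of degree `m`, and suppose `λ` is square-rootable over `K` via `α`.  If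
`m ≡ 0 mod 4` then `p(-1)` is a square in `𝒪_K`; if `m ≡ 2 mod 4` then `p(-1) = α k²`
for some nonzero `k ∈ K`. -/
theorem squareRootable_eval_neg_one
    (l : ℝ) (hl : IsSalem l) (K : Subfield ℝ)
    (hK : K ≤ Subfield.closure {l + l⁻¹})
    (a : K) (ha : SquareRootableVia K l a) :
    ((minpoly K l).natDegree % 4 = 0 →
      ∃ k : K, IsIntegral ℤ k ∧ (minpoly K l).eval (-1) = k ^ 2) ∧
    ((minpoly K l).natDegree % 4 = 2 →
      ∃ k : K, k ≠ 0 ∧ (minpoly K l).eval (-1) = a * k ^ 2) :=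
  squareRootable_eval_neg_one_general l hl K a ha
end

section
/- Let λ be a Salem number and K ⊆ ℚ(λ + λ⁻¹). If the minimal polynomial of λ over K has degree 2, then λ is square-rootable over K via α = λ + λ⁻¹ + 2 (which is a totally positive element of K), with q(x) = x² − √α·x + 1 satisfying q(x)q(−x) = p(x²). -/
open Polynomial

/-! If `minpoly K λ = (X - λ)(X - μ)`, the second root `μ` is a real conjugate of `λ` over `ℚ`
lying outside `K`; the Salem property leaves only `μ = λ⁻¹`, so `minpoly K λ = X² - tX + 1` with
`t = λ + λ⁻¹`. An embedding `K → ℝ` sends `t + 2` to `z + z⁻¹ + 2` for a complex conjugate `z` of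
`λ`, which is `λ^{±1}` or lies on the unit circle away from `-1`, so the image is positive.
Finally, if `s² = t + 2` then `(x² - sx + 1)(x² + sx + 1) = (x² + 1)² - s²x² = x⁴ - tx² + 1`. -/

namespace Polynomial

variable {R : Type*} [CommRing R]

theorem Monic.eq_X_sq_add_C_mul_X_add_C {f : R[X]} (hm : f.Monic)
    (h2 : f.natDegree = 2) :
    f = X ^ 2 + C (f.coeff 1) * X + C (f.coeff 0) := by
  ext n
  rcases n with _ | _ | _ | n
  · simp
  · simp
  · simpa [coeff_X_pow, h2] using hm.coeff_natDegree
  · rw [coeff_eq_zero_of_natDegree_lt (by omega)]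
    simp [coeff_X_pow]

theorem X_sq_sub_C_mul_X_add_one_mul_comp_neg_X {s t : R} (h : s ^ 2 = t + 2) :
    (X ^ 2 - C s * X + 1) * (X ^ 2 - C s * X + 1).comp (-X) =
      (X ^ 2 - C t * X + 1).comp (X ^ 2) := by
  have hC : C s ^ 2 = C t + 2 := by rw [← C_pow, h, C_add, C_ofNat]
  simp only [add_comp, sub_comp, mul_comp, pow_comp, X_comp, C_comp, one_comp]
  linear_combination (-(X ^ 2 : R[X])) * hC

theorem coeff_X_sq_sub_C_mul_X_add_one (s : R) (j : ℕ) :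
    (X ^ 2 - C s * X + 1 : R[X]).coeff j =
      if j = 1 then -s else if j = 0 ∨ j = 2 then 1 else 0 := by
  rcases j with _ | _ | _ | j <;> simp [coeff_X_pow, coeff_one, coeff_X]

end Polynomial

theorem minpoly.exists_conj_of_natDegree_eq_two {K L : Type*} [Field K] [Field L] [Algebra K L]
    {x : L} (hx : IsIntegral K x) (h2 : (minpoly K x).natDegree = 2) :
    ∃ y : L, y ∉ (algebraMap K L).range ∧ ∃ s p : K, minpoly K x = X ^ 2 - C s * X + C p ∧
      algebraMap K L s = x + y ∧ algebraMap K L p = x * y := by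
  set b := (minpoly K x).coeff 1
  set c := (minpoly K x).coeff 0
  have hf : minpoly K x = X ^ 2 + C b * X + C c := (minpoly.monic hx).eq_X_sq_add_C_mul_X_add_C h2
  have hroot : x ^ 2 + algebraMap K L b * x + algebraMap K L c = 0 := by
    simpa [hf] using minpoly.aeval K x
  refine ⟨-algebraMap K L b - x, ?_, -b, c, ?_, ?_, ?_⟩
  · rintro ⟨k, hk⟩
    refine (minpoly.two_le_natDegree_iff hx).mp h2.ge ⟨-b - k, ?_⟩
    rw [map_sub, map_neg, hk]
    ring
  · rw [hf, C_neg]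
    ring
  · simp
  · linear_combination hroot

theorem aeval_minpoly_eq_zero_of_eval₂_minpoly_eq_zero {A K L M : Type*} [CommRing A] [Field K]
    [Ring L] [CommRing M] [Algebra A K] [Algebra A L] [Algebra K L] [IsScalarTower A K L]
    [Algebra A M] (x : L) (ψ : K →ₐ[A] M) {z : M}
    (hz : eval₂ (ψ : K →+* M) z (minpoly K x) = 0) :
    aeval z (minpoly A x) = 0 := by
  obtain ⟨g, hg⟩ := minpoly.dvd_map_of_isScalarTower A K x
  have := congrArg (eval₂ (ψ : K →+* M) z) hg
  rwa [eval₂_mul, hz, zero_mul, eval₂_map, ψ.comp_algebraMap, ← aeval_def] at this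

theorem Complex.re_add_inv_add_two_pos_of_norm_eq_one {z : ℂ} (hz : ‖z‖ = 1) (hz' : z ≠ -1) :
    0 < (z + z⁻¹ + 2).re := by
  have hre : -1 < z.re := by
    refine (neg_le_of_abs_le ((abs_re_le_norm z).trans hz.le)).lt_of_ne fun h => hz' ?_
    have him : z.im = 0 := Complex.abs_re_eq_norm.mp (by rw [← h, hz]; norm_num)
    exact Complex.ext (by simp [← h]) (by simp [him])
  rw [Complex.inv_eq_conj hz]
  simp only [Complex.add_re, Complex.conj_re, Complex.re_ofNat]
  linarith

theorem squareRootableVia_of_mul_comp_neg_X {K : Subfield ℝ} {l : ℝ} {a : K}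
    (ha : TotallyPositive K a)
    (h : (X ^ 2 - C √(a : ℝ) * X + 1) * (X ^ 2 - C √(a : ℝ) * X + 1).comp (-X) =
      ((minpoly K l).map K.subtype).comp (X ^ 2)) :
    SquareRootableVia K l a := by
  have hdeg : (X ^ 2 - C √(a : ℝ) * X + 1 : ℝ[X]).natDegree = 2 := by compute_degree!
  refine ⟨ha, _, by monicity!, fun j hj => ?_, fun j hj => ?_, fun j hj => ?_, h⟩
  · rw [hdeg] at hj ⊢
    interval_cases j <;> simp only [coeff_X_sq_sub_C_mul_X_add_one] <;> norm_num
  · have hj1 : j ≠ 1 := by rintro rfl; exact Nat.not_even_one hj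
    rw [coeff_X_sq_sub_C_mul_X_add_one, if_neg hj1]
    split_ifs
    · exact K.one_mem
    · exact K.zero_mem
  · rw [coeff_X_sq_sub_C_mul_X_add_one]
    split_ifs with _ h02
    · exact ⟨-1, K.neg_mem K.one_mem, by ring⟩
    · obtain rfl | rfl := h02 <;> norm_num at hj
    · exact ⟨0, K.zero_mem, by ring⟩

namespace IsSalem

variable {l : ℝ} (hl : IsSalem l)
include hl

theorem isIntegral_s16 (R : Type*) [CommRing R] [Algebra R ℝ] : IsIntegral R l :=
  hl.2.1.tower_top

theorem add_inv_add_two_pos : 0 < l + l⁻¹ + 2 := by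
  have := hl.1
  positivity

theorem eq_or_eq_inv_or_abs_eq_one {r : ℝ} (hr : aeval r (minpoly ℚ l) = 0) :
    r = l ∨ r = l⁻¹ ∨ |r| = 1 := by
  have hrC : aeval (r : ℂ) (minpoly ℚ l) = 0 := by
    rw [← Complex.coe_algebraMap, aeval_algebraMap_apply, hr, map_zero]
  rcases hl.2.2.2 r hrC with h | h | h
  · exact Or.inl (by exact_mod_cast h)
  · exact Or.inr (Or.inl (by exact_mod_cast h))
  · exact Or.inr (Or.inr (by rwa [Complex.norm_real, Real.norm_eq_abs] at h))

theorem aeval_neg_one_ne_zero : aeval (-1 : ℂ) (minpoly ℚ l) ≠ 0 := by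
  intro h
  have hmin : minpoly ℚ l = X - C (-1) := by
    rw [minpoly.eq_of_irreducible_of_monic (minpoly.irreducible (hl.isIntegral_s16 ℚ)) h
      (minpoly.monic (hl.isIntegral_s16 ℚ))]
    simpa using minpoly.eq_X_sub_C ℂ (-1 : ℚ)
  have hroot : l + 1 = 0 := by simpa [hmin] using minpoly.aeval ℚ l
  linarith [hl.1]

theorem re_add_inv_add_two_pos {z : ℂ} (hz : aeval z (minpoly ℚ l) = 0) :
    0 < (z + z⁻¹ + 2).re := by
  rcases hl.2.2.2 z hz with rfl | rfl | hz1
  · simpa using hl.add_inv_add_two_pos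
  · simpa [add_comm] using hl.add_inv_add_two_pos
  · exact Complex.re_add_inv_add_two_pos_of_norm_eq_one hz1
      (by rintro rfl; exact hl.aeval_neg_one_ne_zero hz)

theorem minpoly_eq_of_natDegree_eq_two {K : Subfield ℝ} (hdeg : (minpoly K l).natDegree = 2) :
    ∃ t : K, (t : ℝ) = l + l⁻¹ ∧ minpoly K l = X ^ 2 - C t * X + 1 := by
  obtain ⟨y, hyK, s, p, hmin, hs, hp⟩ :=
    minpoly.exists_conj_of_natDegree_eq_two (hl.isIntegral_s16 K) hdeg
  have hy : aeval y (minpoly ℚ l) = 0 := by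
    refine aeval_minpoly_eq_zero_of_eval₂_minpoly_eq_zero l (algebraMap K ℝ).toRatAlgHom ?_
    rw [hmin]
    simp only [eval₂_add, eval₂_sub, eval₂_mul, eval₂_pow, eval₂_X, eval₂_C,
      RingHom.toRatAlgHom_toRingHom, hs, hp]
    ring
  rcases hl.eq_or_eq_inv_or_abs_eq_one hy with rfl | rfl | hy1
  · refine absurd ⟨s / 2, ?_⟩ hyK
    rw [map_div₀, hs, map_ofNat]
    ring
  · have hp1 : p = 1 := (algebraMap K ℝ).injective <| by
      rw [hp, map_one, mul_inv_cancel₀ (by linarith [hl.1])]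
    exact ⟨s, hs, by rw [hmin, hp1, C_1]⟩
  · rcases (abs_eq zero_le_one).mp hy1 with rfl | rfl
    · exact absurd ⟨1, map_one _⟩ hyK
    · exact absurd ⟨-1, by simp⟩ hyK

theorem totallyPositive_add_two {K : Subfield ℝ} {t : K}
    (ht : minpoly K l = X ^ 2 - C t * X + 1) : TotallyPositive K (t + 2) := by
  intro φ
  let ψ : K →+* ℂ := (algebraMap ℝ ℂ).comp φ
  have hdeg : 0 < ((minpoly K l).map ψ).degree := by
    rw [degree_map]
    exact minpoly.degree_pos (hl.isIntegral_s16 K)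
  obtain ⟨z, hz⟩ := Complex.exists_root hdeg
  rw [IsRoot, eval_map] at hz
  have hzQ := aeval_minpoly_eq_zero_of_eval₂_minpoly_eq_zero l ψ.toRatAlgHom hz
  have hz' : z ^ 2 - φ t * z + 1 = 0 := by simpa [ht, ψ] using hz
  have hz0 : z ≠ 0 := by rintro rfl; simp at hz'
  have hφ : ((φ (t + 2) : ℝ) : ℂ) = z + z⁻¹ + 2 := by
    rw [map_add, map_ofNat, Complex.ofReal_add, Complex.ofReal_ofNat]
    field_simp
    linear_combination -hz'
  have := congrArg Complex.re hφ
  rw [Complex.ofReal_re] at this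
  exact this ▸ hl.re_add_inv_add_two_pos hzQ

end IsSalem

theorem squareRootable_of_degree_two_general
    (l : ℝ) (hl : IsSalem l) (K : Subfield ℝ)
    (hdeg : (minpoly K l).natDegree = 2) :
    ∃ hmem : l + l⁻¹ + 2 ∈ K,
      TotallyPositive K ⟨l + l⁻¹ + 2, hmem⟩ ∧
      SquareRootableVia K l ⟨l + l⁻¹ + 2, hmem⟩ ∧
      (Polynomial.X ^ 2 - Polynomial.C (Real.sqrt (l + l⁻¹ + 2)) * Polynomial.X + 1) *
          (Polynomial.X ^ 2 - Polynomial.C (Real.sqrt (l + l⁻¹ + 2)) * Polynomial.X +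
            1).comp (-Polynomial.X) =
        ((minpoly K l).map K.subtype).comp (Polynomial.X ^ 2) := by
  obtain ⟨t, ht, hmin⟩ := hl.minpoly_eq_of_natDegree_eq_two hdeg
  have hmem : l + l⁻¹ + 2 ∈ K := ht ▸ add_mem t.2 (ofNat_mem K 2)
  have hTP : TotallyPositive K ⟨l + l⁻¹ + 2, hmem⟩ := by
    convert hl.totallyPositive_add_two hmin
    show l + l⁻¹ + 2 = ((t + 2 : K) : ℝ)
    rw [← ht]
    norm_cast
  have hfac : (X ^ 2 - C √(l + l⁻¹ + 2) * X + 1) *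
      (X ^ 2 - C √(l + l⁻¹ + 2) * X + 1).comp (-X) =
        ((minpoly K l).map K.subtype).comp (X ^ 2) := by
    rw [hmin]
    simpa [ht] using
      X_sq_sub_C_mul_X_add_one_mul_comp_neg_X (Real.sq_sqrt hl.add_inv_add_two_pos.le)
  exact ⟨hmem, hTP, squareRootableVia_of_mul_comp_neg_X hTP hfac, hfac⟩

/-- If `λ` is a Salem number, `K ⊆ ℚ(λ + λ⁻¹)`, and the minimal polynomial of `λ` over
`K` has degree `2`, then `λ + λ⁻¹ + 2` is a totally positive element of `K` and `λ` is
square-rootable over `K` via `α = λ + λ⁻¹ + 2`, with `q(x) = x² − √α x + 1` satisfying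
`q(x) q(-x) = p(x²)`. -/
theorem squareRootable_of_degree_two
    (l : ℝ) (hl : IsSalem l) (K : Subfield ℝ)
    (hK : K ≤ Subfield.closure {l + l⁻¹})
    (hdeg : (minpoly K l).natDegree = 2) :
    ∃ hmem : l + l⁻¹ + 2 ∈ K,
      TotallyPositive K ⟨l + l⁻¹ + 2, hmem⟩ ∧
      SquareRootableVia K l ⟨l + l⁻¹ + 2, hmem⟩ ∧
      (Polynomial.X ^ 2 - Polynomial.C (Real.sqrt (l + l⁻¹ + 2)) * Polynomial.X + 1) *
          (Polynomial.X ^ 2 - Polynomial.C (Real.sqrt (l + l⁻¹ + 2)) * Polynomial.X +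
            1).comp (-Polynomial.X) =
        ((minpoly K l).map K.subtype).comp (Polynomial.X ^ 2) :=
  squareRootable_of_degree_two_general l hl K hdeg
end

section
/- Let λ be a Salem number of degree 4 over ℚ with minimal polynomial p(x) = x⁴ + a x³ + b x² + a x + 1. Then λ is square-rootable over ℚ if and only if p(−1) is a perfect square in ℤ. -/
open Polynomial

/-- A Salem number `l` is square-rootable over `ℚ` via `a` if `a` is a positive rational
and there is a monic palindromic polynomial `q`, with even-degree coefficients in `ℚ`
and odd-degree coefficients in `√a · ℚ`, such that `q(x) q(-x) = p(x²)`, where `p` is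
the minimal polynomial of `l` over `ℚ`. -/
def SquareRootableViaQ (l : ℝ) (a : ℚ) : Prop :=
  0 < a ∧
  ∃ q : Polynomial ℝ, q.Monic ∧
    (∀ j ≤ q.natDegree, q.coeff j = q.coeff (q.natDegree - j)) ∧
    (∀ j, Even j → ∃ c : ℚ, q.coeff j = (c : ℝ)) ∧
    (∀ j, Odd j → ∃ c : ℚ, q.coeff j = Real.sqrt (a : ℝ) * (c : ℝ)) ∧
    q * q.comp (-Polynomial.X) =
      ((minpoly ℚ l).map (algebraMap ℚ ℝ)).comp (Polynomial.X ^ 2)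

/-! For a monic palindromic quartic `q = x⁴ + c x³ + d x² + c x + 1` one has
`q(x) q(-x) = P(x²)`, where `P` is the palindromic quartic with coefficients `2d - c²` and
`d² + 2 - 2c²`; in particular `P(-1) = (d - 2)²`. So a square root `q` of `p` over `ℚ` makes
`p(-1)` the square of the rational `d - 2`, and since `λ` is an algebraic integer, `p(-1)` is an
integer and hence the square of an integer. Conversely, if `p(-1) = k²`, then `d = 2 + |k|` and
`c = √(2d - a)` work: `c` is real because every conjugate of `λ` has real part at least `-1`,
so `-a`, their sum, is at least `-4`. -/

namespace Polynomial

variable {R : Type*} [CommRing R]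

noncomputable def palindromicQuartic (c d : R) : R[X] :=
  X ^ 4 + C c * X ^ 3 + C d * X ^ 2 + C c * X + 1

section

variable (c d : R)

lemma natDegree_palindromicQuartic [Nontrivial R] : (palindromicQuartic c d).natDegree = 4 := by
  unfold palindromicQuartic; compute_degree!

lemma monic_palindromicQuartic [Nontrivial R] : (palindromicQuartic c d).Monic := by
  unfold palindromicQuartic; monicity!

@[simp] lemma coeff_palindromicQuartic_zero : (palindromicQuartic c d).coeff 0 = 1 := by
  simp [palindromicQuartic]

@[simp] lemma coeff_palindromicQuartic_one : (palindromicQuartic c d).coeff 1 = c := by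
  simp [palindromicQuartic, coeff_one]

@[simp] lemma coeff_palindromicQuartic_two : (palindromicQuartic c d).coeff 2 = d := by
  simp [palindromicQuartic, coeff_one]

@[simp] lemma coeff_palindromicQuartic_three : (palindromicQuartic c d).coeff 3 = c := by
  simp [palindromicQuartic, coeff_one]

@[simp] lemma coeff_palindromicQuartic_four : (palindromicQuartic c d).coeff 4 = 1 := by
  simp [palindromicQuartic, coeff_one]

lemma coeff_palindromicQuartic_of_four_lt {j : ℕ} (hj : 4 < j) :
    (palindromicQuartic c d).coeff j = 0 := by
  simp [palindromicQuartic, coeff_X, coeff_one, coeff_X_pow, show j ≠ 4 by omega,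
    show j ≠ 3 by omega, show j ≠ 2 by omega, show 1 ≠ j by omega, show j ≠ 0 by omega]

lemma eval_neg_one_palindromicQuartic : (palindromicQuartic c d).eval (-1) = 2 - 2 * c + d := by
  simp only [palindromicQuartic, eval_add, eval_mul, eval_pow, eval_C, eval_X, eval_one]
  ring

lemma map_palindromicQuartic {S : Type*} [CommRing S] (f : R →+* S) :
    (palindromicQuartic c d).map f = palindromicQuartic (f c) (f d) := by
  simp [palindromicQuartic]

lemma palindromicQuartic_mul_comp_neg_X :
    palindromicQuartic c d * (palindromicQuartic c d).comp (-X) =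
      (palindromicQuartic (2 * d - c ^ 2) (d ^ 2 + 2 - 2 * c ^ 2)).comp (X ^ 2) := by
  simp only [palindromicQuartic, add_comp, sub_comp, mul_comp, pow_comp, X_comp, C_comp, one_comp,
    ofNat_comp, C_sub, C_add, C_mul, C_pow, C_ofNat]
  ring

end

lemma eq_palindromicQuartic_of_palindromic {q : R[X]} (hq : q.Monic) (hdeg : q.natDegree = 4)
    (hpal : ∀ j ≤ 4, q.coeff j = q.coeff (4 - j)) :
    q = palindromicQuartic (q.coeff 1) (q.coeff 2) := by
  have h4 : q.coeff 4 = 1 := hdeg ▸ hq.coeff_natDegree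
  ext (_ | _ | _ | _ | _ | n)
  · simpa [h4] using hpal 0 (by omega)
  · simp
  · simp
  · simpa using hpal 3 (by omega)
  · simpa using h4
  · rw [coeff_eq_zero_of_natDegree_lt (by omega),
      coeff_palindromicQuartic_of_four_lt _ _ (by omega)]

lemma natDegree_mul_comp_neg_X [IsDomain R] {q : R[X]} (hq : q ≠ 0) :
    (q * q.comp (-X)).natDegree = 2 * q.natDegree := by
  have hq' : q.comp (-X) ≠ 0 := fun h => hq (by rw [← comp_neg_X_comp_neg_X q, h, zero_comp])
  rw [natDegree_mul hq hq', natDegree_comp, natDegree_neg, natDegree_X]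
  ring

lemma palindromicQuartic_injective {c d c' d' : R}
    (h : palindromicQuartic c d = palindromicQuartic c' d') : c = c' ∧ d = d' :=
  ⟨by simpa using congrArg (coeff · 3) h, by simpa using congrArg (coeff · 2) h⟩

lemma sub_two_sq_eq_eval_neg_one_of_mul_comp_neg_X [IsDomain R] {q : R[X]} {A B : R}
    (hq : q.Monic) (hpal : ∀ j ≤ q.natDegree, q.coeff j = q.coeff (q.natDegree - j))
    (h : q * q.comp (-X) = (palindromicQuartic A B).comp (X ^ 2)) :
    (q.coeff 2 - 2) ^ 2 = (palindromicQuartic A B).eval (-1) := by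
  have hdeg : q.natDegree = 4 := by
    have := congrArg natDegree h
    rw [natDegree_mul_comp_neg_X hq.ne_zero, natDegree_comp, natDegree_palindromicQuartic,
      natDegree_X_pow] at this
    omega
  rw [hdeg] at hpal
  rw [eq_palindromicQuartic_of_palindromic hq hdeg hpal, palindromicQuartic_mul_comp_neg_X,
    ← expand_eq_comp_X_pow, ← expand_eq_comp_X_pow] at h
  obtain ⟨hA, hB⟩ := palindromicQuartic_injective (expand_injective two_pos h)
  rw [eval_neg_one_palindromicQuartic, ← hA, ← hB]
  ring

lemma palindromicQuartic_mul_comp_neg_X_of_sq {c d A B : R} (hc : c ^ 2 = 2 * d - A)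
    (hd : (d - 2) ^ 2 = (palindromicQuartic A B).eval (-1)) :
    palindromicQuartic c d * (palindromicQuartic c d).comp (-X) =
      (palindromicQuartic A B).comp (X ^ 2) := by
  rw [eval_neg_one_palindromicQuartic] at hd
  rw [palindromicQuartic_mul_comp_neg_X]
  congr 2
  · linear_combination -hc
  · linear_combination hd - 2 * hc

lemma Monic.re_nextCoeff_le_natDegree {P : ℂ[X]} (hP : P.Monic)
    (h : ∀ z ∈ P.roots, -1 ≤ z.re) : P.nextCoeff.re ≤ P.natDegree := by
  have hsplit : P.Splits := IsAlgClosed.splits P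
  have hre : P.roots.sum.re = (P.roots.map Complex.re).sum :=
    map_multiset_sum Complex.reAddGroupHom _
  have hsum :
      Multiset.card (P.roots.map Complex.re) • (-1 : ℝ) ≤ (P.roots.map Complex.re).sum :=
    Multiset.card_nsmul_le_sum fun x hx => by
      obtain ⟨z, hz, rfl⟩ := Multiset.mem_map.mp hx
      exact h z hz
  rw [Multiset.card_map, splits_iff_card_roots.mp hsplit, nsmul_eq_mul] at hsum
  rw [hsplit.nextCoeff_eq_neg_sum_roots_of_monic hP, Complex.neg_re, hre]
  linarith

end Polynomial

open Polynomial

lemma exists_eval_minpoly_eq_intCast {S : Type*} [Field S] [CharZero S] {x : S}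
    (hx : IsIntegral ℤ x) (n : ℤ) : ∃ m : ℤ, (minpoly ℚ x).eval (n : ℚ) = m := by
  rw [minpoly.isIntegrallyClosed_eq_field_fractions' ℚ hx, algebraMap_int_eq]
  exact ⟨(minpoly ℤ x).eval n, eval_intCast_map _ _ _⟩

namespace IsSalem

lemma neg_one_le_re {l : ℝ} (hl : IsSalem l) {z : ℂ} (hz : aeval z (minpoly ℚ l) = 0) :
    -1 ≤ z.re := by
  rcases hl.2.2.2 z hz with rfl | rfl | hz1
  · simp only [Complex.ofReal_re]; linarith [hl.1]
  · rw [← Complex.ofReal_inv, Complex.ofReal_re]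
    linarith [inv_pos.mpr (zero_lt_one.trans hl.1)]
  · linarith [(abs_le.mp (hz1 ▸ Complex.abs_re_le_norm z)).1]

lemma nextCoeff_minpoly_le {l : ℝ} (hl : IsSalem l) :
    (minpoly ℚ l).nextCoeff ≤ (minpoly ℚ l).natDegree := by
  have hmon := (minpoly.monic hl.2.1.tower_top (A := ℚ)).map (algebraMap ℚ ℂ)
  have := hmon.re_nextCoeff_le_natDegree fun z hz => hl.neg_one_le_re <| by
    rwa [mem_roots hmon.ne_zero, IsRoot, eval_map_algebraMap] at hz
  rw [nextCoeff_map (algebraMap ℚ ℂ).injective, natDegree_map, eq_ratCast,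
    Complex.ratCast_re] at this
  exact_mod_cast this

end IsSalem

lemma exists_sqrt_ratCast_eq_sqrt_mul (γ : ℚ) :
    ∃ α c : ℚ, 0 < α ∧ √(γ : ℝ) = √(α : ℝ) * c := by
  rcases le_or_gt γ 0 with hγ | hγ
  · exact ⟨1, 0, one_pos, by simp [Real.sqrt_eq_zero'.mpr (Rat.cast_nonpos.mpr hγ)]⟩
  · exact ⟨γ, 1, hγ, by simp⟩

lemma squareRootableViaQ_of_mul_comp_neg_X {l : ℝ} {α c d : ℚ} (hα : 0 < α)
    (h : palindromicQuartic (√(α : ℝ) * c) (d : ℝ) *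
        (palindromicQuartic (√(α : ℝ) * c) (d : ℝ)).comp (-X) =
      ((minpoly ℚ l).map (algebraMap ℚ ℝ)).comp (X ^ 2)) :
    SquareRootableViaQ l α := by
  refine ⟨hα, _, monic_palindromicQuartic _ _, ?_, fun j hj => ?_, fun j hj => ?_, h⟩
  · rw [natDegree_palindromicQuartic]
    intro j hj
    interval_cases j <;> simp
  · obtain ⟨i, rfl⟩ := hj
    rcases i with _ | _ | _ | i
    · exact ⟨1, by simp⟩
    · exact ⟨d, by simp⟩
    · exact ⟨1, by simp⟩
    · exact ⟨0, by rw [coeff_palindromicQuartic_of_four_lt _ _ (by omega)]; simp⟩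
  · obtain ⟨i, rfl⟩ := hj
    rcases i with _ | _ | i
    · exact ⟨c, by simp⟩
    · exact ⟨c, by simp⟩
    · exact ⟨0, by rw [coeff_palindromicQuartic_of_four_lt _ _ (by omega)]; simp⟩

/-- A Salem number `λ` of degree `4` over `ℚ`, with minimal polynomial
`p(x) = x⁴ + a x³ + b x² + a x + 1`, is square-rootable over `ℚ` if and only if
`p(-1)` is a perfect square in `ℤ`. -/
theorem degree_four_squareRootable_iff
    (l : ℝ) (hl : IsSalem l) (a b : ℚ)
    (hp : minpoly ℚ l =
      Polynomial.X ^ 4 + Polynomial.C a * Polynomial.X ^ 3 +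
        Polynomial.C b * Polynomial.X ^ 2 + Polynomial.C a * Polynomial.X + 1) :
    (∃ α : ℚ, SquareRootableViaQ l α) ↔
      ∃ k : ℤ, (minpoly ℚ l).eval (-1) = (k : ℚ) ^ 2 := by
  replace hp : minpoly ℚ l = palindromicQuartic a b := hp
  have hmap : (minpoly ℚ l).map (algebraMap ℚ ℝ) = palindromicQuartic (a : ℝ) b := by
    rw [hp, map_palindromicQuartic, eq_ratCast, eq_ratCast]
  constructor
  · rintro ⟨α, -, q, hq, hpal, heven, -, hmul⟩
    rw [hmap] at hmul
    obtain ⟨d, hd⟩ := heven 2 even_two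
    have hsq := sub_two_sq_eq_eval_neg_one_of_mul_comp_neg_X hq hpal hmul
    rw [hd, eval_neg_one_palindromicQuartic] at hsq
    obtain ⟨m, hm⟩ := exists_eval_minpoly_eq_intCast hl.2.1 (-1)
    push_cast at hm
    have hdm : (m : ℚ) = (d - 2) * (d - 2) := by
      rw [← hm, hp, eval_neg_one_palindromicQuartic, ← sq]
      exact_mod_cast hsq.symm
    obtain ⟨k, rfl⟩ := Rat.isSquare_intCast_iff.mp ⟨d - 2, hdm⟩
    exact ⟨k, by push_cast [hm]; ring⟩
  · rintro ⟨k, hk⟩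
    have ha : a ≤ 4 := by
      simpa [hp, nextCoeff, natDegree_palindromicQuartic] using hl.nextCoeff_minpoly_le
    obtain ⟨α, c, hα, hc⟩ := exists_sqrt_ratCast_eq_sqrt_mul (2 * (2 + |(k : ℚ)|) - a)
    refine ⟨α, squareRootableViaQ_of_mul_comp_neg_X hα (c := c) (d := 2 + |(k : ℚ)|) ?_⟩
    rw [hmap, ← hc]
    apply palindromicQuartic_mul_comp_neg_X_of_sq
    · rw [Real.sq_sqrt (Rat.cast_nonneg.mpr (by linarith [abs_nonneg (k : ℚ)]))]
      push_cast; ring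
    · have hk' : (2 + |(k : ℚ)| - 2) ^ 2 = 2 - 2 * a + b := by
        rw [← eval_neg_one_palindromicQuartic, ← hp, hk, add_sub_cancel_left, sq_abs]
      rw [eval_neg_one_palindromicQuartic]
      exact_mod_cast hk'
end

section
/- The Salem number λ with Salem polynomial p(x) = x⁴ − x³ − 3x² − x + 1, namely λ = (1 + √21 + √(2(3+√21)))/4, satisfies p(−1) = 1, and hence λ is square-rootable over ℚ via 3 and via 7. -/
open Polynomial

/-!
`λ` is the larger root of `x² − ((1 + √21)/2) x + 1`, so over `ℝ` the quartic
`p = x⁴ − x³ − 3x² − x + 1` factors as `(x − λ)(x − λ⁻¹)(x² − ((1 − √21)/2) x + 1)`, and the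
last factor has its roots on the unit circle because `|1 − √21| < 4`. Over `ℚ`, `p` is
irreducible: a rational root, or a factorisation into two rational quadratics, would make `21`
a rational square. Finally `q = x⁴ + √α x³ + t x² + √α x + 1` satisfies
`q(x) q(−x) = (x⁴ + t x² + 1)² − α x² (x² + 1)²`, which equals `p(x²)` for `(α, t) = (3, 1)`
and `(7, 3)`.
-/

lemma Polynomial.Monic.eq_X_sq_add_C_mul_X_add_C_s18 {R : Type*} [CommRing R] {p : R[X]}
    (hm : p.Monic) (hd : p.natDegree = 2) : p = X ^ 2 + C (p.coeff 1) * X + C (p.coeff 0) := by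
  have h2 : p.coeff 2 = 1 := hd ▸ hm.coeff_natDegree
  conv_lhs => rw [eq_quadratic_of_degree_le_two (natDegree_le_iff_degree_le.mp hd.le), h2, C_1,
    one_mul]

lemma Polynomial.Monic.irreducible_of_natDegree_eq_four {K : Type*} [Field K] {p : K[X]}
    (hm : p.Monic) (hd : p.natDegree = 4) (hroot : ∀ x, ¬ p.IsRoot x)
    (hquad : ∀ a b c d : K, (X ^ 2 + C a * X + C b) * (X ^ 2 + C c * X + C d) ≠ p) :
    Irreducible p := by
  refine hm.irreducible_iff_natDegree'.mpr ⟨fun h => by simp [h] at hd, ?_⟩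
  rintro f g hf hg rfl hdeg
  rw [hd, Finset.mem_Ioc] at hdeg
  obtain hg1 | hg2 : g.natDegree = 1 ∨ g.natDegree = 2 := by omega
  · exact hroot (-g.coeff 0) (by rw [hg.eq_X_add_C hg1]; simp)
  · have hf2 : f.natDegree = 2 := by
      have := hf.natDegree_mul hg
      omega
    refine hquad (f.coeff 1) (f.coeff 0) (g.coeff 1) (g.coeff 0) ?_
    rw [← hf.eq_X_sq_add_C_mul_X_add_C_s18 hf2, ← hg.eq_X_sq_add_C_mul_X_add_C_s18 hg2]

lemma isSquare_21_of_quadratic_factor {a b c d : ℚ}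
    (h3 : a + c = -1) (h2 : b + d + a * c = -3) (h1 : a * d + b * c = -1) (h0 : b * d = 1) :
    IsSquare (21 : ℚ) := by
  have ha : a * (d - b) = b - 1 := by linear_combination h1 - b * h3
  have hc : c * (b - d) = d - 1 := by linear_combination h1 - d * h3
  -- multiply `ha` by `hc`, then use `a * c = -3 - (b + d)` and `(d - b) ^ 2 = (b + d) ^ 2 - 4`
  have hσ : (b + d - 2) * ((b + d) ^ 2 + 5 * (b + d) + 7) = 0 := by
    linear_combination c * (b - d) * ha + (b - 1) * hc + (d - b) ^ 2 * h2 + (13 + 4 * (b + d)) * h0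
  have hσ2 : b + d = 2 := by
    have : (b + d) ^ 2 + 5 * (b + d) + 7 ≠ 0 := by nlinarith [sq_nonneg (2 * (b + d) + 5)]
    linear_combination (mul_eq_zero.mp hσ).resolve_right this
  have hb : b = 1 := by nlinarith [sq_nonneg (b - d)]
  have hd : d = 1 := by linarith
  subst hb hd
  exact ⟨2 * a + 1, by linear_combination -4 * a * h3 + 4 * h2⟩

lemma irreducible_quartic : Irreducible (X ^ 4 - X ^ 3 - 3 * X ^ 2 - X + 1 : ℚ[X]) := by
  have h21 : ¬ IsSquare (21 : ℚ) := by norm_num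
  refine Monic.irreducible_of_natDegree_eq_four (by monicity!) (by compute_degree!) ?_ ?_
  · intro r hr
    have hr : r ^ 4 - r ^ 3 - 3 * r ^ 2 - r + 1 = 0 := by simpa using hr
    have hr0 : r ≠ 0 := by rintro rfl; norm_num at hr
    -- `p(r) / r² = y² − y − 5` with `y = r + r⁻¹`
    refine h21 ⟨2 * (r + r⁻¹) - 1, ?_⟩
    field_simp
    linear_combination -4 * hr
  · intro a b c d h
    have hexp : (X ^ 2 + C a * X + C b) * (X ^ 2 + C c * X + C d) =
        X ^ 4 + C (a + c) * X ^ 3 + C (b + d + a * c) * X ^ 2 + C (a * d + b * c) * X +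
          C (b * d) := by
      simp only [C_add, C_mul]; ring
    rw [hexp] at h
    have e3 := congrArg (coeff · 3) h
    have e2 := congrArg (coeff · 2) h
    have e1 := congrArg (coeff · 1) h
    have e0 := congrArg (coeff · 0) h
    simp only [coeff_add, coeff_sub, coeff_C_mul, coeff_X_pow, coeff_X, coeff_one, coeff_C,
      coeff_ofNat_mul] at e3 e2 e1 e0
    norm_num at e3 e2 e1 e0
    exact h21 (isSquare_21_of_quadratic_factor e3 e2 e1 e0)

lemma aeval_quartic {A : Type*} [CommRing A] [Algebra ℚ A] (z : A) :
    aeval z (X ^ 4 - X ^ 3 - 3 * X ^ 2 - X + 1 : ℚ[X]) = z ^ 4 - z ^ 3 - 3 * z ^ 2 - z + 1 := by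
  simp only [map_add, map_sub, map_mul, map_pow, aeval_X, map_one, map_ofNat]

lemma quartic_eq_mul {K : Type*} [Field K] [CharZero K] {s l : K} (hs : s ^ 2 = 21) (hl : l ≠ 0)
    (hlq : l ^ 2 - (1 + s) / 2 * l + 1 = 0) (z : K) :
    z ^ 4 - z ^ 3 - 3 * z ^ 2 - z + 1 = (z - l) * (z - l⁻¹) * (z ^ 2 - (1 - s) / 2 * z + 1) := by
  have hsum : l + l⁻¹ = (1 + s) / 2 := by field_simp; linear_combination 2 * hlq
  have hprod : (z - l) * (z - l⁻¹) = z ^ 2 - (1 + s) / 2 * z + 1 := by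
    rw [← hsum]; field_simp; ring
  rw [hprod]
  linear_combination z ^ 2 / 4 * hs

lemma Complex.norm_eq_one_of_sq_sub_mul_add_one_eq_zero {t : ℝ} (ht : |t| < 2) {z : ℂ}
    (hz : z ^ 2 - t * z + 1 = 0) : ‖z‖ = 1 := by
  obtain ⟨hre, him⟩ := Complex.ext_iff.mp hz
  simp only [sq, sub_re, add_re, mul_re, ofReal_re, ofReal_im, one_re, zero_re, sub_im, add_im,
    mul_im, one_im, zero_im] at hre him
  have hre2 : 2 * z.re = t := by
    have him' : z.im * (2 * z.re - t) = 0 := by linear_combination him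
    refine sub_eq_zero.mp ((mul_eq_zero.mp him').resolve_left fun him0 => ?_)
    rw [him0] at hre
    nlinarith [sq_abs t, abs_nonneg t, sq_nonneg (2 * z.re - t)]
  have hsq : ‖z‖ ^ 2 = 1 := by
    rw [Complex.sq_norm, normSq_apply]
    linear_combination -hre + z.re * hre2
  exact (pow_eq_one_iff_of_nonneg (norm_nonneg z) two_ne_zero).mp hsq

lemma minpoly_eq_quartic {s l : ℝ} (hs : s ^ 2 = 21) (hlq : l ^ 2 - (1 + s) / 2 * l + 1 = 0)
    (hl : l ≠ 0) : minpoly ℚ l = X ^ 4 - X ^ 3 - 3 * X ^ 2 - X + 1 := by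
  refine (minpoly.eq_of_irreducible_of_monic irreducible_quartic ?_ (by monicity!)).symm
  rw [aeval_quartic, quartic_eq_mul hs hl hlq, sub_self, zero_mul, zero_mul]

lemma isSalem_of_sq_sub_mul_add_one_eq_zero {s l : ℝ} (hs : s ^ 2 = 21)
    (hlq : l ^ 2 - (1 + s) / 2 * l + 1 = 0) (hs0 : 0 ≤ s) (hl : 1 < l) : IsSalem l := by
  have hl0 : (l : ℂ) ≠ 0 := Complex.ofReal_ne_zero.mpr (by positivity)
  have hfac := quartic_eq_mul (K := ℂ) (s := s) (by exact_mod_cast hs) hl0 (by exact_mod_cast hlq)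
  have haeval (z : ℂ) : aeval z (minpoly ℚ l) = z ^ 4 - z ^ 3 - 3 * z ^ 2 - z + 1 := by
    rw [minpoly_eq_quartic hs hlq (by positivity), aeval_quartic]
  refine ⟨hl, ⟨X ^ 4 - X ^ 3 - 3 * X ^ 2 - X + 1, by monicity!, ?_⟩,
    by rw [haeval, hfac, sub_self, mul_zero, zero_mul], ?_⟩
  · simp only [eval₂_add, eval₂_sub, eval₂_mul, eval₂_pow, eval₂_X, eval₂_one, eval₂_ofNat]
    rw [quartic_eq_mul hs (by positivity) hlq]
    ring
  · intro z hz
    simp only [haeval, hfac, mul_eq_zero, sub_eq_zero] at hz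
    rcases hz with (hz | hz) | hz
    · exact Or.inl hz
    · exact Or.inr (Or.inl hz)
    · refine Or.inr (Or.inr (Complex.norm_eq_one_of_sq_sub_mul_add_one_eq_zero (t := (1 - s) / 2)
        (abs_lt.mpr ⟨by nlinarith, by linarith⟩) ?_))
      push_cast
      linear_combination hz

lemma squareRootableViaQ_of_minpoly_eq {l : ℝ} {a b α t : ℚ}
    (hmin : minpoly ℚ l = X ^ 4 + C a * X ^ 3 + C b * X ^ 2 + C a * X + 1) (hα : 0 < α)
    (ha : 2 * t - α = a) (hb : t ^ 2 + 2 - 2 * α = b) : SquareRootableViaQ l α := by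
  subst ha hb
  set q : ℝ[X] := X ^ 4 + C √(α : ℝ) * X ^ 3 + C (t : ℝ) * X ^ 2 + C √(α : ℝ) * X + 1 with hq
  have hdeg : q.natDegree = 4 := by rw [hq]; compute_degree!
  have hcoeff (j : ℕ) : q.coeff j = if j = 0 ∨ j = 4 then 1 else if j = 2 then (t : ℝ)
      else if j = 1 ∨ j = 3 then √(α : ℝ) else 0 := by
    simp only [hq, coeff_add, coeff_C_mul, coeff_X_pow, coeff_X, coeff_one]
    rcases j with _ | _ | _ | _ | _ | j <;> simp
  refine ⟨hα, q, by rw [hq]; monicity!, ?_, ?_, ?_, ?_⟩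
  · intro j hj
    rw [hdeg] at hj ⊢
    interval_cases j <;> simp [hcoeff]
  · intro j hj
    rw [hcoeff]
    rcases j with _ | _ | _ | _ | _ | j
    exacts [⟨1, by simp⟩, absurd hj (by decide), ⟨t, by simp⟩, absurd hj (by decide), ⟨1, by simp⟩,
      ⟨0, by simp⟩]
  · intro j hj
    rw [hcoeff]
    rcases j with _ | _ | _ | _ | _ | j
    exacts [absurd hj (by decide), ⟨1, by simp⟩, absurd hj (by decide), ⟨1, by simp⟩,
      absurd hj (by decide), ⟨0, by simp⟩]
  · have hr : C √(α : ℝ) ^ 2 = C (α : ℝ) := by rw [← C_pow, Real.sq_sqrt (by positivity)]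
    rw [hmin]
    simp only [hq, Polynomial.map_add, Polynomial.map_mul, Polynomial.map_pow, map_X, map_C,
      Polynomial.map_one, add_comp, mul_comp, pow_comp, X_comp, C_comp, one_comp]
    simp only [eq_ratCast, Rat.cast_sub, Rat.cast_add, Rat.cast_mul, Rat.cast_pow, Rat.cast_ofNat,
      C_add, C_sub, C_mul, C_pow, C_ofNat]
    linear_combination -(X ^ 6 + 2 * X ^ 4 + X ^ 2 : ℝ[X]) * hr

/-- The Salem number `λ = (1 + √21 + √(2(3 + √21)))/4`, with Salem polynomial
`p(x) = x⁴ − x³ − 3x² − x + 1`, satisfies `p(-1) = 1`, and is square-rootable over `ℚ`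
via `3` and via `7`. -/
theorem salem_4_6_squareRootable :
    let l : ℝ := (1 + Real.sqrt 21 + Real.sqrt (2 * (3 + Real.sqrt 21))) / 4
    IsSalem l ∧
    minpoly ℚ l =
      (Polynomial.X ^ 4 - Polynomial.X ^ 3 - 3 * Polynomial.X ^ 2 - Polynomial.X + 1 :
        Polynomial ℚ) ∧
    (minpoly ℚ l).eval (-1 : ℚ) = 1 ∧
    SquareRootableViaQ l 3 ∧ SquareRootableViaQ l 7 := by
  intro l
  have hs : √21 ^ 2 = 21 := Real.sq_sqrt (by norm_num)
  have hs4 : 4 < √21 := (Real.lt_sqrt (by norm_num)).mpr (by norm_num)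
  have hu : √(2 * (3 + √21)) ^ 2 = 2 * (3 + √21) := Real.sq_sqrt (by positivity)
  have hl : 1 < l := by
    have := Real.sqrt_nonneg (2 * (3 + √21))
    simp only [l]
    linarith
  have hlq : l ^ 2 - (1 + √21) / 2 * l + 1 = 0 := by
    simp only [l]
    linear_combination hu / 16 - hs / 16
  have hmin := minpoly_eq_quartic hs hlq (by positivity)
  have hpal : minpoly ℚ l = X ^ 4 + C (-1) * X ^ 3 + C (-3) * X ^ 2 + C (-1) * X + 1 := by
    rw [hmin]; simp only [map_neg, map_one, C_ofNat]; ring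
  refine ⟨isSalem_of_sq_sub_mul_add_one_eq_zero hs hlq (Real.sqrt_nonneg 21) hl, hmin,
    by rw [hmin]; norm_num, ?_, ?_⟩
  · exact squareRootableViaQ_of_minpoly_eq (t := 1) hpal (by norm_num) (by norm_num) (by norm_num)
  · exact squareRootableViaQ_of_minpoly_eq (t := 3) hpal (by norm_num) (by norm_num) (by norm_num)
end
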